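/- arXiv:math/0511519 — 4 statements merged into one kernel-verified Lean document; each statement's English description precedes it below -/
import Mathlib

section
/- Let B be a standard one-dimensional Brownian motion and, for constants S_0 > 0, sigma > 0 and r >= 0, set S_t = S_0 * exp(sigma * B_t + (r - sigma^2/2) * t). Then for every strike k > 0 and every maturity T > 0, the Asian call price is dominated by the European call price: e^{-rT} * E[ ( (1/T) * ∫_0^T S_t dt - k )_+ ] <= e^{-rT} * E[ (S_T - k)_+ ], equivalently E[ ( (1/T) * ∫_0^T S_t dt - k )_+ ] <= E[ (S_T - k)_+ ]. -/
open MeasureTheory ProbabilityTheory Filter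

section helpers
open Real
lemma gauss_pdf_mul (v : NNReal) (hv : v ≠ 0) (c x : ℝ) :
    gaussianPDFReal 0 v x * Real.exp (c * x)
      = Real.exp (c ^ 2 * v / 2) * gaussianPDFReal (c * v) v x := by
  have hv' : (v : ℝ) ≠ 0 := by exact_mod_cast hv
  have h : rexp (-(x - 0) ^ 2 / (2 * v)) * rexp (c * x)
      = rexp (c ^ 2 * v / 2) * rexp (-(x - c * v) ^ 2 / (2 * v)) := by
    rw [← Real.exp_add, ← Real.exp_add]
    congr 1
    field_simp
    ring
  simp only [gaussianPDFReal_def, mul_assoc, h]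
  ring

lemma gauss_pdf_meas (μ : ℝ) (v : NNReal) :
    Measurable fun x => (((gaussianPDFReal μ v x).toNNReal : NNReal) : ENNReal) :=
  (measurable_gaussianPDFReal μ v).real_toNNReal.coe_nnreal_ennreal

lemma gaussianReal_eq_withDensity (μ : ℝ) (v : NNReal) (hv : v ≠ 0) :
    gaussianReal μ v = volume.withDensity
      (fun x => (((gaussianPDFReal μ v x).toNNReal : NNReal) : ENNReal)) := by
  rw [gaussianReal_of_var_ne_zero _ hv]
  rfl

lemma integrable_exp_gaussianReal (v : NNReal) (c : ℝ) :
    Integrable (fun x => Real.exp (c * x)) (gaussianReal 0 v) := by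
  by_cases hv : v = 0
  · rw [hv, gaussianReal_zero_var]
    refine (integrable_const (Real.exp (c * 0))).congr ?_
    rw [MeasureTheory.ae_dirac_eq]
    exact Filter.eventually_pure.mpr (by simp)
  rw [gaussianReal_eq_withDensity 0 v hv]
  rw [integrable_withDensity_iff (gauss_pdf_meas 0 v)
    (Filter.Eventually.of_forall fun x => ENNReal.coe_lt_top)]
  have : (fun x => Real.exp (c * x) * ((((gaussianPDFReal 0 v x).toNNReal : NNReal) : ENNReal)).toReal)
      = fun x => Real.exp (c ^ 2 * v / 2) * gaussianPDFReal (c * v) v x := by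
    funext x
    rw [ENNReal.coe_toReal, Real.coe_toNNReal _ (gaussianPDFReal_nonneg 0 v x), mul_comm,
      gauss_pdf_mul v hv]
  rw [this]
  exact (integrable_gaussianPDFReal _ _).const_mul _

lemma integral_exp_gaussianReal (v : NNReal) (c : ℝ) :
    ∫ x, Real.exp (c * x) ∂(gaussianReal 0 v) = Real.exp (c ^ 2 * v / 2) := by
  by_cases hv : v = 0
  · rw [hv, gaussianReal_zero_var]
    simp
  rw [gaussianReal_eq_withDensity 0 v hv,
    integral_withDensity_eq_integral_smul ((measurable_gaussianPDFReal 0 v).real_toNNReal)]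
  have : (fun x => ((gaussianPDFReal 0 v x).toNNReal : NNReal) • Real.exp (c * x))
      = fun x => Real.exp (c ^ 2 * v / 2) * gaussianPDFReal (c * v) v x := by
    funext x
    rw [NNReal.smul_def, smul_eq_mul, Real.coe_toNNReal _ (gaussianPDFReal_nonneg 0 v x),
      gauss_pdf_mul v hv]
  rw [this, integral_const_mul, integral_gaussianPDFReal_eq_one _ hv, mul_one]

lemma euro_mono {Ω : Type*} [MeasurableSpace Ω] (P : Measure Ω) [IsProbabilityMeasure P]
    (Y Z : Ω → ℝ) (hY : Measurable Y) (hZ : Measurable Z) (hindep : IndepFun Y Z P)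
    (hYpos : ∀ ω, 0 ≤ Y ω) (hYint : Integrable Y P) (hZint : Integrable Z P)
    (hZmean : 1 ≤ ∫ ω, Z ω ∂P) (k : ℝ) (hk : 0 ≤ k) :
    ∫ ω, max (Y ω - k) 0 ∂P ≤ ∫ ω, max (Y ω * Z ω - k) 0 ∂P := by
  set μ := P.map Y with hμ
  set ν := P.map Z with hν
  have hprod : P.map (fun ω => (Y ω, Z ω)) = μ.prod ν :=
    (indepFun_iff_map_prod_eq_prod_map_map hY.aemeasurable hZ.aemeasurable).mp hindep
  haveI : IsProbabilityMeasure μ := Measure.isProbabilityMeasure_map hY.aemeasurable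
  haveI : IsProbabilityMeasure ν := Measure.isProbabilityMeasure_map hZ.aemeasurable
  have hidμ : Integrable (fun a : ℝ => a) μ := by
    rw [hμ, integrable_map_measure (g := fun a : ℝ => a) measurable_id'.aestronglyMeasurable hY.aemeasurable]
    simpa [Function.comp_def] using hYint
  have hidν : Integrable (fun b : ℝ => b) ν := by
    rw [hν, integrable_map_measure (g := fun b : ℝ => b) measurable_id'.aestronglyMeasurable hZ.aemeasurable]
    simpa [Function.comp_def] using hZint
  have hmeanν : 1 ≤ ∫ b, b ∂ν := by
    rwa [hν, integral_map (f := fun b : ℝ => b) hZ.aemeasurable measurable_id'.aestronglyMeasurable]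
  have hhmeas : Measurable (fun p : ℝ × ℝ => max (p.1 * p.2 - k) 0) := by fun_prop
  have hhle : ∀ p : ℝ × ℝ, ‖max (p.1 * p.2 - k) 0‖ ≤ ‖p.1 * p.2‖ := by
    intro p
    rw [Real.norm_eq_abs, Real.norm_eq_abs, abs_of_nonneg (le_max_right _ _)]
    rcases le_or_gt (p.1 * p.2 - k) 0 with h | h
    · rw [max_eq_right h]; positivity
    · rw [max_eq_left h.le]
      calc p.1 * p.2 - k ≤ p.1 * p.2 := by linarith
        _ ≤ |p.1 * p.2| := le_abs_self _
  have hhint : Integrable (fun p : ℝ × ℝ => max (p.1 * p.2 - k) 0) (μ.prod ν) :=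
    (hidμ.mul_prod hidν).mono hhmeas.aestronglyMeasurable
      (Filter.Eventually.of_forall hhle)
  have hRHS : ∫ ω, max (Y ω * Z ω - k) 0 ∂P
      = ∫ a, ∫ b, max (a * b - k) 0 ∂ν ∂μ := by
    rw [← integral_prod _ hhint, ← hprod,
      integral_map (hY.aemeasurable.prodMk hZ.aemeasurable) hhmeas.aestronglyMeasurable]
  have hLHS : ∫ ω, max (Y ω - k) 0 ∂P = ∫ a, max (a - k) 0 ∂μ := by
    rw [hμ, integral_map (f := fun a : ℝ => max (a - k) 0) hY.aemeasurable
      (((measurable_id.sub measurable_const).max measurable_const).aestronglyMeasurable)]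
  rw [hLHS, hRHS]
  have hinner : ∀ a : ℝ, 0 ≤ a → max (a - k) 0 ≤ ∫ b, max (a * b - k) 0 ∂ν := by
    intro a ha
    have hintb : Integrable (fun b => max (a * b - k) 0) ν := by
      refine (hidν.const_mul a).mono
        (((measurable_const.mul measurable_id).sub measurable_const).max
          measurable_const).aestronglyMeasurable (Filter.Eventually.of_forall fun b => ?_)
      exact hhle (a, b)
    rcases le_or_gt (a - k) 0 with h | h
    · rw [max_eq_right h]
      exact integral_nonneg fun b => le_max_right _ _
    · rw [max_eq_left h.le]
      have h1 : a - k ≤ a * ∫ b, b ∂ν - k := by nlinarith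
      have h2 : a * ∫ b, b ∂ν - k = ∫ b, a * b - k ∂ν := by
        rw [integral_sub (hidν.const_mul a) (integrable_const k), integral_const_mul,
          integral_const, probReal_univ, one_smul]
      have h3 : ∫ b, a * b - k ∂ν ≤ ∫ b, max (a * b - k) 0 ∂ν :=
        integral_mono ((hidν.const_mul a).sub (integrable_const k)) hintb
          fun b => le_max_left _ _
      linarith
  have haepos : ∀ᵐ a ∂μ, 0 ≤ a := by
    rw [hμ]
    exact (ae_map_iff hY.aemeasurable measurableSet_Ici).mpr
      (Filter.Eventually.of_forall hYpos)
  refine integral_mono_of_nonneg (Filter.Eventually.of_forall fun a => le_max_right _ _)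
    hhint.integral_prod_left ?_
  filter_upwards [haepos] with a ha using hinner a ha
end helpers

/-- A standard one-dimensional Brownian motion started at `0` under the measure `P`:
measurable marginals, `B 0 = 0`, continuous sample paths, independent increments, and
Gaussian increments `B t - B s ~ N(0, t - s)` for `0 ≤ s ≤ t`. -/
def IsBrownianMotion {Ω : Type*} [MeasurableSpace Ω] (P : Measure Ω) (B : ℝ → Ω → ℝ) : Prop :=
  (∀ t, Measurable (B t)) ∧
  (∀ ω, B 0 ω = 0) ∧
  (∀ ω, Continuous fun t => B t ω) ∧
  (∀ n : ℕ, ∀ t : ℕ → ℝ, 0 ≤ t 0 → Monotone t →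
    iIndepFun
      (fun i : Fin n => fun ω => B (t (i + 1)) ω - B (t i) ω) P) ∧
  (∀ s t : ℝ, 0 ≤ s → s ≤ t →
    Measure.map (fun ω => B t ω - B s ω) P = gaussianReal 0 (t - s).toNNReal)

/-- The Asian call price is dominated by the European call price in the
Black–Scholes model with interest rate `r ≥ 0`. -/
theorem asian_call_le_european_call
    {Ω : Type*} [MeasurableSpace Ω] (P : Measure Ω) [IsProbabilityMeasure P]
    (B : ℝ → Ω → ℝ) (hB : IsBrownianMotion P B)
    (S₀ σ r : ℝ) (hS₀ : 0 < S₀) (hσ : 0 < σ) (hr : 0 ≤ r)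
    (S : ℝ → Ω → ℝ)
    (hS : ∀ t ω, S t ω = S₀ * Real.exp (σ * B t ω + (r - σ ^ 2 / 2) * t))
    (k T : ℝ) (hk : 0 < k) (hT : 0 < T) :
    ∫ ω, max ((1 / T) * (∫ t in (0:ℝ)..T, S t ω) - k) 0 ∂P ≤
      ∫ ω, max (S T ω - k) 0 ∂P := by
  obtain ⟨hBm, hB0, hBc, hBi, hBg⟩ := hB
  set c : ℝ := r - σ ^ 2 / 2 with hc
  -- exponential moments of increments
  have hExp : ∀ s t : ℝ, 0 ≤ s → s ≤ t → ∀ u : ℝ,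
      Integrable (fun ω => Real.exp (u * (B t ω - B s ω))) P ∧
      ∫ ω, Real.exp (u * (B t ω - B s ω)) ∂P = Real.exp (u ^ 2 * (t - s) / 2) := by
    intro s t hs hst u
    have hmeas : Measurable fun ω => B t ω - B s ω := (hBm t).sub (hBm s)
    have hmap := hBg s t hs hst
    have hexpmeas : Measurable fun x : ℝ => Real.exp (u * x) := by fun_prop
    constructor
    · have h1 := integrable_exp_gaussianReal (t - s).toNNReal u
      rw [← hmap, integrable_map_measure (g := fun x : ℝ => Real.exp (u * x))
        hexpmeas.aestronglyMeasurable hmeas.aemeasurable] at h1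
      exact h1
    · have h1 := integral_exp_gaussianReal (t - s).toNNReal u
      rw [← hmap, integral_map (f := fun x : ℝ => Real.exp (u * x)) hmeas.aemeasurable
        hexpmeas.aestronglyMeasurable] at h1
      rw [h1, Real.coe_toNNReal _ (by linarith)]
  have hB0' : ∀ t : ℝ, (fun ω => B t ω - B 0 ω) = B t := by
    intro t; funext ω; rw [hB0, sub_zero]
  -- basic facts about S
  have hSmeas : ∀ t, Measurable (S t) := by
    intro t
    have : S t = fun ω => S₀ * Real.exp (σ * B t ω + c * t) := funext fun ω => hS t ω
    rw [this]
    exact (((hBm t).const_mul σ).add_const _).exp.const_mul S₀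
  have hSpos : ∀ t ω, 0 < S t ω := by
    intro t ω; rw [hS t ω]; positivity
  have hSdecomp : ∀ t, S t = fun ω => (S₀ * Real.exp (c * t)) * Real.exp (σ * (B t ω - B 0 ω)) := by
    intro t; funext ω
    rw [hS t ω, hB0, sub_zero, mul_assoc, ← Real.exp_add]
    ring_nf
  have hSint : ∀ t : ℝ, 0 ≤ t → Integrable (S t) P := by
    intro t ht
    rw [hSdecomp t]
    exact ((hExp 0 t le_rfl ht σ).1).const_mul _
  have hSmean : ∀ t : ℝ, 0 ≤ t → ∫ ω, S t ω ∂P = S₀ * Real.exp (r * t) := by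
    intro t ht
    rw [hSdecomp t]
    rw [integral_const_mul, (hExp 0 t le_rfl ht σ).2, mul_assoc, ← Real.exp_add, hc]
    congr 2
    ring
  set C : ℝ := S₀ * Real.exp (r * T) with hC
  have hgmeas : ∀ t : ℝ, Measurable fun ω => max (S t ω - k) 0 :=
    fun t => ((hSmeas t).sub measurable_const).max measurable_const
  have hgle : ∀ (t : ℝ) ω, max (S t ω - k) 0 ≤ S t ω :=
    fun t ω => max_le (by linarith [hSpos t ω]) (hSpos t ω).le
  have hgint : ∀ t : ℝ, 0 ≤ t → Integrable (fun ω => max (S t ω - k) 0) P := by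
    intro t ht
    refine (hSint t ht).mono (hgmeas t).aestronglyMeasurable
      (Filter.Eventually.of_forall fun ω => ?_)
    rw [Real.norm_eq_abs, Real.norm_eq_abs, abs_of_nonneg (le_max_right _ _),
      abs_of_nonneg (hSpos t ω).le]
    exact hgle t ω
  have hgbound : ∀ t : ℝ, 0 ≤ t → t ≤ T → ∫ ω, max (S t ω - k) 0 ∂P ≤ C := by
    intro t ht htT
    calc ∫ ω, max (S t ω - k) 0 ∂P ≤ ∫ ω, S t ω ∂P :=
          integral_mono (hgint t ht) (hSint t ht) (fun ω => hgle t ω)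
      _ = S₀ * Real.exp (r * t) := hSmean t ht
      _ ≤ C := by
          rw [hC]
          exact mul_le_mul_of_nonneg_left
            (Real.exp_le_exp.mpr (mul_le_mul_of_nonneg_left htT hr)) hS₀.le
  -- Step B : monotonicity of the European payoff in maturity
  have hstepB : ∀ t : ℝ, 0 ≤ t → t ≤ T →
      ∫ ω, max (S t ω - k) 0 ∂P ≤ ∫ ω, max (S T ω - k) 0 ∂P := by
    intro t ht htT
    set X : Ω → ℝ := fun ω => Real.exp (σ * (B T ω - B t ω) + c * (T - t)) with hX
    have hXmeas : Measurable X :=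
      ((((hBm T).sub (hBm t)).const_mul σ).add_const _).exp
    have hXeq : X = fun ω => Real.exp (c * (T - t)) * Real.exp (σ * (B T ω - B t ω)) := by
      funext ω
      rw [hX, ← Real.exp_add, add_comm]
    have hXint : Integrable X P := by
      rw [hXeq]
      exact ((hExp t T ht htT σ).1).const_mul _
    have hXmean : 1 ≤ ∫ ω, X ω ∂P := by
      have h1 : ∫ ω, X ω ∂P = Real.exp (c * (T - t)) * Real.exp (σ ^ 2 * (T - t) / 2) := by
        rw [hXeq, integral_const_mul, (hExp t T ht htT σ).2]
      rw [h1, ← Real.exp_add]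
      apply Real.one_le_exp
      have h2 : c * (T - t) + σ ^ 2 * (T - t) / 2 = r * (T - t) := by rw [hc]; ring
      rw [h2]
      have : 0 ≤ T - t := by linarith
      positivity
    have hST : S T = fun ω => S t ω * X ω := by
      funext ω
      rw [hS T ω, hS t ω, hX, mul_assoc, ← Real.exp_add]
      congr 1
      ring
    have hind : IndepFun (B t) (fun ω => B T ω - B t ω) P := by
      set u : ℕ → ℝ := fun j => if j = 0 then 0 else if j = 1 then t else T with hu
      have hmono : Monotone u := by
        apply monotone_nat_of_le_succ
        intro n
        match n with
        | 0 => simpa [hu] using ht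
        | 1 => simpa [hu] using htT
        | (n + 2) => simp [hu]
      have h := hBi 2 u (by simp [hu]) hmono
      have h01 := h.indepFun (show (0 : Fin 2) ≠ 1 by decide)
      norm_num [hu] at h01
      rwa [hB0' t] at h01
    have hindS : IndepFun (S t) X P := by
      have hφ : Measurable fun a : ℝ => S₀ * Real.exp (σ * a + c * t) := by fun_prop
      have hψ : Measurable fun a : ℝ => Real.exp (σ * a + c * (T - t)) := by fun_prop
      have h2 := hind.comp hφ hψ
      have e1 : (fun a : ℝ => S₀ * Real.exp (σ * a + c * t)) ∘ (B t) = S t :=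
        funext fun ω => (hS t ω).symm
      have e2 : (fun a : ℝ => Real.exp (σ * a + c * (T - t))) ∘ (fun ω => B T ω - B t ω) = X := rfl
      rwa [e1, e2] at h2
    calc ∫ ω, max (S t ω - k) 0 ∂P ≤ ∫ ω, max (S t ω * X ω - k) 0 ∂P :=
          euro_mono P (S t) X (hSmeas t) hXmeas hindS (fun ω => (hSpos t ω).le)
            (hSint t ht) hXint hXmean k hk.le
      _ = ∫ ω, max (S T ω - k) 0 ∂P := by rw [hST]
  -- Fubini setup
  have hBjoint : Measurable fun p : ℝ × Ω => B p.1 p.2 :=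
    measurable_uncurry_of_continuous_of_measurable hBc hBm
  have hSjoint : Measurable fun p : ℝ × Ω => S p.1 p.2 := by
    have he : (fun p : ℝ × Ω => S p.1 p.2)
        = fun p : ℝ × Ω => S₀ * Real.exp (σ * B p.1 p.2 + c * p.1) :=
      funext fun p => hS p.1 p.2
    rw [he]
    exact (((hBjoint.const_mul σ).add (measurable_fst.const_mul c)).exp).const_mul S₀
  have hFmeas : Measurable fun p : ℝ × Ω => max (S p.1 p.2 - k) 0 :=
    (hSjoint.sub measurable_const).max measurable_const
  have hmeasIoc : volume (Set.Ioc (0:ℝ) T) = ENNReal.ofReal T := by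
    rw [Real.volume_Ioc, sub_zero]
  haveI : IsFiniteMeasure (volume.restrict (Set.Ioc (0:ℝ) T)) := by
    constructor
    rw [Measure.restrict_apply_univ, hmeasIoc]
    exact ENNReal.ofReal_lt_top
  have hFint : Integrable (fun p : ℝ × Ω => max (S p.1 p.2 - k) 0)
      ((volume.restrict (Set.Ioc (0:ℝ) T)).prod P) := by
    rw [integrable_prod_iff hFmeas.aestronglyMeasurable]
    constructor
    · filter_upwards [ae_restrict_mem measurableSet_Ioc] with t htmem
      exact hgint t htmem.1.le
    · have heq : ∀ t : ℝ, ∫ ω, ‖max (S t ω - k) 0‖ ∂P = ∫ ω, max (S t ω - k) 0 ∂P := by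
        intro t
        refine integral_congr_ae (Filter.Eventually.of_forall fun ω => ?_)
        exact Real.norm_of_nonneg (le_max_right _ _)
      refine Integrable.mono' (integrable_const C)
        (hFmeas.norm.stronglyMeasurable.integral_prod_right').aestronglyMeasurable ?_
      filter_upwards [ae_restrict_mem measurableSet_Ioc] with t htmem
      rw [Real.norm_eq_abs, abs_of_nonneg (integral_nonneg fun ω => norm_nonneg _), heq t]
      exact hgbound t htmem.1.le htmem.2
  have hswap : ∫ t in Set.Ioc (0:ℝ) T, (∫ ω, max (S t ω - k) 0 ∂P) ∂volume
      = ∫ ω, (∫ t in Set.Ioc (0:ℝ) T, max (S t ω - k) 0 ∂volume) ∂P :=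
    integral_integral_swap hFint
  have hJint : Integrable (fun ω => ∫ t in Set.Ioc (0:ℝ) T, max (S t ω - k) 0 ∂volume) P :=
    hFint.integral_prod_right
  -- pointwise Jensen step
  have hjensen : ∀ ω, max ((1 / T) * (∫ t in (0:ℝ)..T, S t ω) - k) 0
      ≤ (1 / T) * ∫ t in Set.Ioc (0:ℝ) T, max (S t ω - k) 0 ∂volume := by
    intro ω
    have hScont : Continuous fun t => S t ω := by
      have he : (fun t => S t ω) = fun t => S₀ * Real.exp (σ * B t ω + c * t) :=
        funext fun t => hS t ω
      rw [he]
      exact continuous_const.mul (((continuous_const.mul (hBc ω)).add (continuous_const.mul continuous_id)).rexp)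
    have hSInt : IntegrableOn (fun t => S t ω) (Set.Ioc 0 T) volume :=
      hScont.integrableOn_Ioc
    have hgIntT : IntegrableOn (fun t => max (S t ω - k) 0) (Set.Ioc 0 T) volume :=
      ((hScont.sub continuous_const).max continuous_const).integrableOn_Ioc
    have hI : ∫ t in (0:ℝ)..T, S t ω = ∫ t in Set.Ioc (0:ℝ) T, S t ω ∂volume :=
      intervalIntegral.integral_of_le hT.le
    have hmeasT : (volume (Set.Ioc (0:ℝ) T)).toReal = T := by
      rw [hmeasIoc, ENNReal.toReal_ofReal hT.le]
    have hsub : ∫ t in Set.Ioc (0:ℝ) T, (S t ω - k) ∂volume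
        = (∫ t in Set.Ioc (0:ℝ) T, S t ω ∂volume) - k * T := by
      rw [integral_sub hSInt ((integrableOn_const_iff (C := k)).mpr (Or.inr (by rw [hmeasIoc]; exact ENNReal.ofReal_lt_top))),
        setIntegral_const, measureReal_def, hmeasT, smul_eq_mul, mul_comm]
    have hmono2 : ∫ t in Set.Ioc (0:ℝ) T, (S t ω - k) ∂volume
        ≤ ∫ t in Set.Ioc (0:ℝ) T, max (S t ω - k) 0 ∂volume :=
      integral_mono (hSInt.sub ((integrableOn_const_iff (C := k)).mpr (Or.inr (by rw [hmeasIoc]; exact ENNReal.ofReal_lt_top))))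
        hgIntT fun t => le_max_left _ _
    have hnn : 0 ≤ (1 / T) * ∫ t in Set.Ioc (0:ℝ) T, max (S t ω - k) 0 ∂volume := by
      have : 0 ≤ ∫ t in Set.Ioc (0:ℝ) T, max (S t ω - k) 0 ∂volume :=
        integral_nonneg fun t => le_max_right _ _
      positivity
    refine max_le ?_ hnn
    rw [hI]
    have hTne : T ≠ 0 := hT.ne'
    have : (1 / T) * (∫ t in Set.Ioc (0:ℝ) T, S t ω ∂volume) - k
        = (1 / T) * ∫ t in Set.Ioc (0:ℝ) T, (S t ω - k) ∂volume := by
      rw [hsub]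
      field_simp
    rw [this]
    have hTpos : 0 < 1 / T := by positivity
    exact mul_le_mul_of_nonneg_left hmono2 hTpos.le
  -- final chain
  calc ∫ ω, max ((1 / T) * (∫ t in (0:ℝ)..T, S t ω) - k) 0 ∂P
      ≤ ∫ ω, (1 / T) * (∫ t in Set.Ioc (0:ℝ) T, max (S t ω - k) 0 ∂volume) ∂P := by
        refine integral_mono_of_nonneg
          (Filter.Eventually.of_forall fun ω => le_max_right _ _)
          (hJint.const_mul (1 / T)) (Filter.Eventually.of_forall fun ω => hjensen ω)
    _ = (1 / T) * ∫ ω, (∫ t in Set.Ioc (0:ℝ) T, max (S t ω - k) 0 ∂volume) ∂P :=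
        integral_const_mul _ _
    _ = (1 / T) * ∫ t in Set.Ioc (0:ℝ) T, (∫ ω, max (S t ω - k) 0 ∂P) ∂volume := by
        rw [hswap]
    _ ≤ (1 / T) * ∫ t in Set.Ioc (0:ℝ) T, (∫ ω, max (S T ω - k) 0 ∂P) ∂volume := by
        have hmono3 : ∫ t in Set.Ioc (0:ℝ) T, (∫ ω, max (S t ω - k) 0 ∂P) ∂volume
            ≤ ∫ t in Set.Ioc (0:ℝ) T, (∫ ω, max (S T ω - k) 0 ∂P) ∂volume := by
          refine integral_mono_of_nonneg
            (Filter.Eventually.of_forall fun t => integral_nonneg fun ω => le_max_right _ _)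
            (integrable_const _) ?_
          filter_upwards [ae_restrict_mem measurableSet_Ioc] with t htmem
          exact hstepB t htmem.1.le htmem.2
        have hTpos : (0:ℝ) ≤ 1 / T := by positivity
        exact mul_le_mul_of_nonneg_left hmono3 hTpos
    _ = ∫ ω, max (S T ω - k) 0 ∂P := by
        rw [setIntegral_const, smul_eq_mul, ← mul_assoc]
        rw [measureReal_def, hmeasIoc, ENNReal.toReal_ofReal hT.le]
        field_simp
end

section
/- Let nu, mu be real numbers with nu > 0 and nu - mu > 2, and let a > 0. Then ∫_a^∞ (xi - a) * xi^{-1-(nu-mu)/2} * e^{-1/xi} * Phi((nu+mu)/2, 1+nu; 1/xi) d xi = (Gamma((nu-mu)/2 - 1) / Gamma((nu-mu)/2 + 1)) * a^{1-(nu-mu)/2} * e^{-1/a} * Phi((nu+mu)/2 + 2, 1+nu; 1/a). -/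
open MeasureTheory ProbabilityTheory Filter

/-- The confluent hypergeometric function of the first kind
`Φ(α, γ; z) = ∑ (α)_k / (γ)_k * z^k / k!`. -/
noncomputable def confluentPhi (α γ z : ℝ) : ℝ :=
  ∑' n : ℕ, ((ascPochhammer ℝ n).eval α / (ascPochhammer ℝ n).eval γ) * z ^ n / (n.factorial : ℝ)


open Finset Set

noncomputable def P (x : ℝ) (n : ℕ) : ℝ := (ascPochhammer ℝ n).eval x

lemma P_zero (x : ℝ) : P x 0 = 1 := by simp [P]

lemma P_succ (x : ℝ) (n : ℕ) : P x (n+1) = P x n * (x + n) :=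
  ascPochhammer_succ_eval n x

lemma P_succ_left (x : ℝ) (n : ℕ) : P x (n+1) = x * P (x+1) n := by
  simp [P, ascPochhammer_succ_left, Polynomial.eval_comp]

lemma P_pos {x : ℝ} (hx : 0 < x) (n : ℕ) : 0 < P x n := ascPochhammer_pos n x hx

lemma P_abs_le (x : ℝ) (n : ℕ) : |P x n| ≤ P (|x|+1) n := by
  induction n with
  | zero => simp [P_zero]
  | succ n ih =>
    rw [P_succ, P_succ, abs_mul]
    have h1 : |x + (n:ℝ)| ≤ |x| + 1 + n := by
      calc |x + (n:ℝ)| ≤ |x| + |(n:ℝ)| := abs_add_le _ _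
        _ ≤ |x| + 1 + n := by rw [abs_of_nonneg (by positivity : (0:ℝ) ≤ (n:ℝ))]; linarith
    exact mul_le_mul ih h1 (abs_nonneg _) (le_of_lt (P_pos (by positivity) n))

lemma summable_aux {c γ r : ℝ} (hc : 0 < c) (hγ : 0 < γ) (hr : 0 < r) :
    Summable (fun n : ℕ => P c n / P γ n * r ^ n / (n.factorial : ℝ)) := by
  set f : ℕ → ℝ := fun n => P c n / P γ n * r ^ n / (n.factorial : ℝ) with hf
  have hfpos : ∀ n, 0 < f n := fun n => by
    have := P_pos hc n; have := P_pos hγ n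
    positivity
  apply summable_of_ratio_test_tendsto_lt_one (l := 0) one_pos
    (Filter.Eventually.of_forall fun n => (hfpos n).ne')
  have key : ∀ n : ℕ, ‖f (n+1)‖ / ‖f n‖ = (1 + (c - γ)/(γ + n)) * (r / (n+1)) := by
    intro n
    have h1 : (0:ℝ) < γ + n := by positivity
    have h2 := P_pos hc n; have h3 := P_pos hγ n
    have h4 : (0:ℝ) < (n.factorial : ℝ) := by positivity
    rw [Real.norm_eq_abs, Real.norm_eq_abs, abs_of_pos (hfpos _), abs_of_pos (hfpos _), hf]
    simp only [P_succ, Nat.factorial_succ, pow_succ]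
    push_cast
    field_simp
    ring
  rw [show (0:ℝ) = (1 + 0) * 0 by ring]
  refine Tendsto.congr (fun n => (key n).symm) (Tendsto.mul ?_ ?_)
  · exact (Tendsto.div_atTop tendsto_const_nhds
      (tendsto_atTop_add_const_left _ γ tendsto_natCast_atTop_atTop)).const_add 1
  · exact Tendsto.div_atTop tendsto_const_nhds
      (tendsto_atTop_add_const_right _ 1 tendsto_natCast_atTop_atTop)

lemma summable_abs_term (α : ℝ) {γ : ℝ} (hγ : 0 < γ) (z : ℝ) :
    Summable (fun n : ℕ => ‖P α n / P γ n * z ^ n / (n.factorial : ℝ)‖) := by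
  refine Summable.of_nonneg_of_le (fun n => norm_nonneg _) (fun n => ?_)
    (summable_aux (by positivity : (0:ℝ) < |α| + 1) hγ
      (by positivity : (0:ℝ) < |z| + 1))
  have h3 := P_pos hγ n
  have h4 : (0:ℝ) < (n.factorial : ℝ) := by positivity
  rw [Real.norm_eq_abs, abs_div, abs_mul, abs_div, abs_pow,
    abs_of_pos h3, abs_of_pos h4]
  gcongr
  · have := P_pos (show (0:ℝ) < |α|+1 by positivity) n; positivity
  · exact P_abs_le α n
  · linarith [abs_nonneg z]

lemma pascal_sum (f : ℕ → ℝ) (n : ℕ) :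
    ∑ k ∈ range (n+2), ((n+1).choose k : ℝ) * f k
      = ∑ k ∈ range (n+1), (n.choose k : ℝ) * f k
        + ∑ k ∈ range (n+1), (n.choose k : ℝ) * f (k+1) := by
  rw [Finset.sum_range_succ' (fun k => ((n+1).choose k : ℝ) * f k) (n+1)]
  have h1 : ∀ k, ((n+1).choose (k+1) : ℝ) * f (k+1)
      = (n.choose k : ℝ) * f (k+1) + (n.choose (k+1) : ℝ) * f (k+1) := by
    intro k; rw [Nat.choose_succ_succ]; push_cast; ring
  rw [Finset.sum_congr rfl (fun k _ => h1 k), Finset.sum_add_distrib]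
  have h2 : ∑ k ∈ range (n+1), (n.choose (k+1) : ℝ) * f (k+1) + ((n+1).choose 0 : ℝ) * f 0
      = ∑ k ∈ range (n+1), (n.choose k : ℝ) * f k := by
    rw [Finset.sum_range_succ (fun k => (n.choose (k+1):ℝ) * f (k+1)) n] at *
    rw [show (n.choose (n+1) : ℝ) = 0 by simp [Nat.choose_eq_zero_of_lt]]
    rw [Finset.sum_range_succ' (fun k => (n.choose k : ℝ) * f k) n]
    simp
  linarith [h2]

lemma chu_step {γ : ℝ} (hγ : 0 < γ) (α : ℝ) (k : ℕ) :
    P α (k+1) / P γ (k+1)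
      = P α k / P γ k - (γ - α)/γ * (P α k / P (γ+1) k) := by
  have hG : P γ k ≠ 0 := (P_pos hγ k).ne'
  have hQ : P (γ+1) k ≠ 0 := (P_pos (by linarith) k).ne'
  have hrel : P γ k * (γ + k) = γ * P (γ+1) k := by
    rw [← P_succ, P_succ_left]
  rw [P_succ α k, P_succ γ k]
  have hγk : γ + (k:ℝ) ≠ 0 := by positivity
  field_simp
  linear_combination (P α k * (γ - α)) * hrel

lemma chu (α : ℝ) : ∀ n : ℕ, ∀ γ : ℝ, 0 < γ →
    ∑ k ∈ range (n+1), (-1:ℝ)^k * (n.choose k) * (P α k / P γ k)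
      = P (γ-α) n / P γ n := by
  intro n
  induction n with
  | zero => intro γ hγ; simp [P_zero]
  | succ n ih =>
    intro γ hγ
    have hstep := pascal_sum (fun k => (-1:ℝ)^k * (P α k / P γ k)) n
    have e1 : ∑ k ∈ range (n+1+1), (-1:ℝ)^k * ((n+1).choose k) * (P α k / P γ k)
        = ∑ k ∈ range (n+2), ((n+1).choose k : ℝ) * ((-1:ℝ)^k * (P α k / P γ k)) := by
      apply Finset.sum_congr rfl; intro k _; ring
    rw [e1, hstep]
    have e2 : ∑ k ∈ range (n+1), (n.choose k : ℝ) * ((-1:ℝ)^k * (P α k / P γ k))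
        = P (γ-α) n / P γ n := by
      rw [← ih γ hγ]; apply Finset.sum_congr rfl; intro k _; ring
    have e3 : ∑ k ∈ range (n+1), (n.choose k : ℝ) * ((-1:ℝ)^(k+1) * (P α (k+1) / P γ (k+1)))
        = -(P (γ-α) n / P γ n) + (γ-α)/γ * (P (γ+1-α) n / P (γ+1) n) := by
      have e3a : ∀ k ∈ range (n+1), (n.choose k : ℝ) * ((-1:ℝ)^(k+1) * (P α (k+1) / P γ (k+1)))
          = -((n.choose k : ℝ) * ((-1:ℝ)^k * (P α k / P γ k)))
            + (γ-α)/γ * ((-1:ℝ)^k * (n.choose k : ℝ) * (P α k / P (γ+1) k)) := by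
        intro k _
        rw [chu_step hγ α k]
        ring
      rw [Finset.sum_congr rfl e3a, Finset.sum_add_distrib, Finset.sum_neg_distrib,
        ← Finset.mul_sum, e2, ih (γ+1) (by linarith)]
    rw [e2, e3]
    have hL : P (γ-α) (n+1) = (γ-α) * P (γ-α+1) n := P_succ_left _ n
    have hR : P γ (n+1) = γ * P (γ+1) n := P_succ_left _ n
    have hQ : P (γ+1) n ≠ 0 := (P_pos (by linarith) n).ne'
    have e4 : γ + 1 - α = γ - α + 1 := by ring
    rw [hL, hR, ← e4]
    field_simp
    ring

lemma confluentPhi_eq (α γ z : ℝ) :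
    confluentPhi α γ z = ∑' n : ℕ, P α n / P γ n * z ^ n / (n.factorial : ℝ) := rfl

lemma exp_series (z : ℝ) : Real.exp z = ∑' n : ℕ, z ^ n / (n.factorial : ℝ) := by
  rw [Real.exp_eq_exp_ℝ, NormedSpace.exp_eq_tsum_div]

lemma summable_exp_norm (z : ℝ) : Summable (fun n : ℕ => ‖z ^ n / (n.factorial : ℝ)‖) := by
  have := Real.summable_pow_div_factorial |z|
  refine this.congr fun n => ?_
  rw [Real.norm_eq_abs, abs_div, abs_pow, abs_of_pos (by positivity : (0:ℝ) < (n.factorial:ℝ))]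

lemma kummer {γ : ℝ} (hγ : 0 < γ) (α z : ℝ) :
    Real.exp (-z) * confluentPhi α γ z = confluentPhi (γ - α) γ (-z) := by
  rw [exp_series, confluentPhi_eq, confluentPhi_eq,
    tsum_mul_tsum_eq_tsum_sum_antidiagonal_of_summable_norm
      (summable_exp_norm (-z)) (summable_abs_term α hγ z)]
  apply tsum_congr
  intro n
  rw [Finset.Nat.sum_antidiagonal_eq_sum_range_succ_mk]
  trans (∑ k ∈ range (n+1),
      ((-1:ℝ)^k * ((n.choose k) : ℝ) * (P α k / P γ k)) * ((-z)^n / (n.factorial : ℝ)))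
  · conv_lhs => rw [← Finset.sum_range_reflect]
    refine Finset.sum_congr rfl fun k hk => ?_
    have hkn : k ≤ n := Nat.lt_succ_iff.mp (Finset.mem_range.mp hk)
    dsimp only
    simp only [Nat.succ_sub_one]
    rw [Nat.sub_sub_self hkn]
    have hzz := pow_sub_mul_pow z hkn
    have hs' := pow_sub_mul_pow (-1:ℝ) hkn
    have h4 : (-1:ℝ)^k * (-1:ℝ)^k = 1 := by
      rw [← pow_add, show k+k = 2*k by ring, pow_mul]; norm_num
    have hz : (-z)^(n-k) * z^k = (-1:ℝ)^k * (-z)^n := by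
      rw [neg_pow, neg_pow]
      linear_combination ((-1:ℝ)^(n-k)) * hzz + (z^n * (-1:ℝ)^k) * hs'
        - (z^n * (-1:ℝ)^(n-k)) * h4
    have hn : ((n.choose k : ℝ)) * (k.factorial : ℝ) * ((n-k).factorial : ℝ)
        = (n.factorial : ℝ) := by exact_mod_cast Nat.choose_mul_factorial_mul_factorial hkn
    have hG : P γ k ≠ 0 := (P_pos hγ k).ne'
    have hf1 : ((n-k).factorial : ℝ) ≠ 0 := by positivity
    have hf2 : (k.factorial : ℝ) ≠ 0 := by positivity
    have hf3 : (n.factorial : ℝ) ≠ 0 := by positivity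
    rw [neg_pow z, neg_pow z]
    field_simp
    linear_combination (P α k * (-1:ℝ)^(n-k) * (n.factorial:ℝ)) * hzz
      + (P α k * z^n * (n.factorial:ℝ) * (-1:ℝ)^k) * hs'
      - (P α k * z^n * (n.factorial:ℝ) * (-1:ℝ)^(n-k)) * h4
      - (P α k * z^n * (-1:ℝ)^k * (-1:ℝ)^n) * hn
  · rw [← Finset.sum_mul, chu α n γ hγ, mul_div_assoc]

lemma integrable_term {p a : ℝ} (hp : 1 < p) (ha : 0 < a) :
    IntegrableOn (fun ξ : ℝ => (ξ - a) * ξ ^ (-1 - p)) (Set.Ioi a) := by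
  have h1 : IntegrableOn (fun ξ : ℝ => ξ ^ (-p)) (Set.Ioi a) :=
    integrableOn_Ioi_rpow_of_lt (by linarith) ha
  have h2 : IntegrableOn (fun ξ : ℝ => a * ξ ^ (-1 - p)) (Set.Ioi a) :=
    (integrableOn_Ioi_rpow_of_lt (by linarith) ha).const_mul a
  refine MeasureTheory.IntegrableOn.congr_fun (h1.sub h2) (fun ξ hξ => ?_) measurableSet_Ioi
  have hξ0 : 0 < ξ := ha.trans hξ
  have h3 : ξ * ξ ^ (-1 - p) = ξ ^ (-p) := by
    rw [show ξ * ξ ^ (-1-p) = ξ ^ (1:ℝ) * ξ ^ (-1-p) by rw [Real.rpow_one],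
      ← Real.rpow_add hξ0]
    congr 1; ring
  simp only [Pi.sub_apply]
  rw [sub_mul, h3]

lemma integral_term {p a : ℝ} (hp : 1 < p) (ha : 0 < a) :
    ∫ ξ in Set.Ioi a, (ξ - a) * ξ ^ (-1 - p) = a ^ (1 - p) / ((p - 1) * p) := by
  have h1 : IntegrableOn (fun ξ : ℝ => ξ ^ (-p)) (Set.Ioi a) :=
    integrableOn_Ioi_rpow_of_lt (by linarith) ha
  have h2 : IntegrableOn (fun ξ : ℝ => a * ξ ^ (-1 - p)) (Set.Ioi a) :=
    (integrableOn_Ioi_rpow_of_lt (by linarith) ha).const_mul a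
  have e0 : ∫ ξ in Set.Ioi a, (ξ - a) * ξ ^ (-1 - p)
      = ∫ ξ in Set.Ioi a, (ξ ^ (-p) - a * ξ ^ (-1 - p)) := by
    refine setIntegral_congr_fun measurableSet_Ioi (fun ξ hξ => ?_)
    have hξ0 : 0 < ξ := ha.trans hξ
    have : ξ * ξ ^ (-1 - p) = ξ ^ (-p) := by
      rw [show ξ * ξ ^ (-1-p) = ξ ^ (1:ℝ) * ξ ^ (-1-p) by rw [Real.rpow_one],
        ← Real.rpow_add hξ0]
      congr 1; ring
    rw [sub_mul, this]
  rw [e0, integral_sub h1 h2, MeasureTheory.integral_const_mul,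
    integral_Ioi_rpow_of_lt (by linarith) ha, integral_Ioi_rpow_of_lt (by linarith) ha]
  have ha1 : a * a ^ (-1 - p + 1) = a ^ (1 - p) := by
    rw [show a * a ^ (-1-p+1) = a ^ (1:ℝ) * a ^ (-1-p+1) by rw [Real.rpow_one],
      ← Real.rpow_add ha]
    congr 1; ring
  have he : -p + 1 = 1 - p := by ring
  rw [he, ← ha1, show (-1 - p + 1) = -p by ring]
  have hp0 : p ≠ 0 := by linarith
  have hp2 : (1:ℝ) - p ≠ 0 := by linarith
  have hp1 : p - 1 ≠ 0 := by linarith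
  have hX : a ^ (-p) ≠ 0 := (Real.rpow_pos_of_pos ha _).ne'
  field_simp
  ring

lemma poch_id (s : ℝ) (n : ℕ) :
    (s-1) * s * P (s+1) n = P (s-1) n * ((s + n - 1) * (s + n)) := by
  have h1 : P (s-1) (n+2) = (s-1) * P s (n+1) := by
    have := P_succ_left (s-1) (n+1); rwa [show s - 1 + 1 = s by ring] at this
  have h2 : P s (n+1) = s * P (s+1) n := P_succ_left s n
  have h3 : P (s-1) (n+2) = P (s-1) (n+1) * (s - 1 + (n+1 : ℕ)) := P_succ (s-1) (n+1)
  have h4 : P (s-1) (n+1) = P (s-1) n * (s - 1 + n) := P_succ (s-1) n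
  have := h1
  rw [h2, h3, h4] at this
  push_cast at this
  rw [← mul_assoc] at this
  rw [← this]
  ring

lemma main_lemma {γ s a : ℝ} (hγ : 0 < γ) (hs : 1 < s) (ha : 0 < a) :
    ∫ ξ in Set.Ioi a, (ξ - a) * ξ ^ (-1 - s) * confluentPhi (1 + s) γ (-(1/ξ)) =
      a ^ (1 - s) / ((s - 1) * s) * confluentPhi (s - 1) γ (-(1/a)) := by
  set c : ℕ → ℝ := fun n => P (1+s) n / P γ n / (n.factorial : ℝ) with hc
  have hcpos : ∀ n, 0 < c n := fun n => by
    have := P_pos (show (0:ℝ) < 1 + s by linarith) n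
    have := P_pos hγ n
    positivity
  set f : ℕ → ℝ → ℝ := fun n ξ => (c n * (-1)^n) * ((ξ - a) * ξ ^ (-1 - s - (n:ℕ))) with hf
  -- basic exponent facts
  have hrw : ∀ n : ℕ, ∀ ξ : ℝ, 0 < ξ → ξ ^ (-1 - s - (n:ℕ)) = ξ ^ (-1-s) * (1/ξ)^n := by
    intro n ξ hξ
    rw [show (-1 - s - (n:ℕ) : ℝ) = (-1-s) + (-(n:ℝ)) by push_cast; ring,
      Real.rpow_add hξ, Real.rpow_neg hξ.le, Real.rpow_natCast, one_div, inv_pow]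
  have hexp : ∀ n : ℕ, (-1 - s - (n:ℕ) : ℝ) = -1 - (s + n) := by intro n; push_cast; ring
  have hsn : ∀ n : ℕ, 1 < s + (n:ℝ) := fun n => by
    have : (0:ℝ) ≤ n := Nat.cast_nonneg n
    linarith
  -- integrability of each base term
  have hg : ∀ n : ℕ, IntegrableOn (fun ξ : ℝ => (ξ - a) * ξ ^ (-1 - s - (n:ℕ))) (Set.Ioi a) := by
    intro n
    have := integrable_term (hsn n) ha
    simpa [hexp n] using this
  have hgint : ∀ n : ℕ, ∫ ξ in Set.Ioi a, (ξ - a) * ξ ^ (-1 - s - (n:ℕ))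
      = a ^ (1 - (s+n)) / ((s + n - 1) * (s + n)) := by
    intro n
    have := integral_term (hsn n) ha
    rw [← this]
    apply setIntegral_congr_fun measurableSet_Ioi
    intro ξ _
    rw [hexp n]
  have hfint : ∀ n : ℕ, Integrable (f n) (volume.restrict (Set.Ioi a)) := fun n =>
    ((hg n).const_mul _)
  -- Step A : integrand equals tsum
  have stepA : ∀ ξ ∈ Set.Ioi a,
      (ξ - a) * ξ ^ (-1 - s) * confluentPhi (1 + s) γ (-(1/ξ)) = ∑' n, f n ξ := by
    intro ξ hξ
    have hξ0 : 0 < ξ := ha.trans hξ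
    rw [confluentPhi_eq, ← tsum_mul_left]
    apply tsum_congr
    intro n
    simp only [hf, hc]
    rw [hrw n ξ hξ0, neg_pow]
    ring
  -- the summable bound
  have hIb : Summable (fun n : ℕ => c n * (a ^ (1 - (s+(n:ℕ))) / ((s + n - 1) * (s + n)))) := by
    have hbound := (summable_aux (show (0:ℝ) < 1+s by linarith) hγ
      (show (0:ℝ) < 1/a by positivity)).mul_left (a ^ (1-s) / ((s-1)*s))
    refine Summable.of_nonneg_of_le (fun n => ?_) (fun n => ?_) hbound
    · have h2 : (0:ℝ) < s + n - 1 := by have := hsn n; linarith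
      have h3 : (0:ℝ) < s + n := by have := hsn n; linarith
      exact mul_nonneg (hcpos n).le
        (div_nonneg (Real.rpow_pos_of_pos ha _).le (mul_nonneg h2.le h3.le))
    · have h2 : (0:ℝ) < s + n - 1 := by have := hsn n; linarith
      have h3 : (0:ℝ) < s + n := by have := hsn n; linarith
      have ha2 : a ^ (1 - (s+(n:ℕ))) = a ^ (1-s) * (1/a)^n := by
        rw [show (1 - (s+(n:ℕ)) : ℝ) = (1-s) + (-(n:ℝ)) by push_cast; ring,
          Real.rpow_add ha, Real.rpow_neg ha.le, Real.rpow_natCast, one_div, inv_pow]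
      have hP1 := P_pos (show (0:ℝ) < 1 + s by linarith) n
      have hP2 := P_pos hγ n
      have hfn : (0:ℝ) < (n.factorial : ℝ) := by positivity
      have hX : (0:ℝ) ≤ P (1+s) n / P γ n * (1/a)^n / (n.factorial:ℝ) := by positivity
      have e : c n * (a ^ (1 - (s+(n:ℕ))) / ((s+n-1)*(s+n)))
          = (P (1+s) n / P γ n * (1/a)^n / (n.factorial:ℝ)) * (a^(1-s) / ((s+n-1)*(s+n))) := by
        simp only [hc]; rw [ha2]; ring
      have hY : a^(1-s)/((s+n-1)*(s+n)) ≤ a^(1-s)/((s-1)*s) := by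
        have hn0 : (0:ℝ) ≤ n := Nat.cast_nonneg n
        gcongr
        · linarith
        · nlinarith
      calc c n * (a ^ (1 - (s+(n:ℕ))) / ((s+n-1)*(s+n)))
          = (P (1+s) n / P γ n * (1/a)^n / (n.factorial:ℝ)) * (a^(1-s) / ((s+n-1)*(s+n))) := e
        _ ≤ (P (1+s) n / P γ n * (1/a)^n / (n.factorial:ℝ)) * (a^(1-s) / ((s-1)*s)) :=
            mul_le_mul_of_nonneg_left hY hX
        _ = a^(1-s) / ((s-1)*s) * (P (1+s) n / P γ n * (1/a)^n / (n.factorial:ℝ)) := by ring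
  -- Step C : swap integral and sum
  have hlint : ∀ n : ℕ, (∫⁻ ξ in Set.Ioi a, ‖f n ξ‖ₑ)
      = ENNReal.ofReal (c n * (a ^ (1 - (s+(n:ℕ))) / ((s + n - 1) * (s + n)))) := by
    intro n
    rw [← MeasureTheory.ofReal_integral_norm_eq_lintegral_enorm (hfint n)]
    congr 1
    have e1 : ∫ ξ in Set.Ioi a, ‖f n ξ‖
        = ∫ ξ in Set.Ioi a, c n * ((ξ - a) * ξ ^ (-1 - s - (n:ℕ))) := by
      apply setIntegral_congr_fun measurableSet_Ioi
      intro ξ hξ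
      have hξ0 : 0 < ξ := ha.trans hξ
      have h1 : (0:ℝ) ≤ ξ - a := by have := (mem_Ioi.mp hξ); linarith
      have h2 : (0:ℝ) ≤ ξ ^ (-1 - s - (n:ℕ)) := (Real.rpow_pos_of_pos hξ0 _).le
      simp only [hf]
      rw [Real.norm_eq_abs, abs_mul, abs_mul, abs_mul, abs_of_pos (hcpos n),
        abs_of_nonneg h1, abs_of_nonneg h2, abs_pow, abs_neg, abs_one, one_pow, mul_one]
    rw [e1, MeasureTheory.integral_const_mul, hgint n]
  have swap : ∫ ξ in Set.Ioi a, (∑' n, f n ξ) = ∑' n, ∫ ξ in Set.Ioi a, f n ξ := by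
    apply MeasureTheory.integral_tsum (fun n => (hfint n).aestronglyMeasurable)
    rw [funext hlint, ← ENNReal.ofReal_tsum_of_nonneg (fun n => ?_) hIb]
    · exact ENNReal.ofReal_ne_top
    · have h2 : (0:ℝ) < s + n - 1 := by have := hsn n; linarith
      have h3 : (0:ℝ) < s + n := by have := hsn n; linarith
      exact mul_nonneg (hcpos n).le
        (div_nonneg (Real.rpow_pos_of_pos ha _).le (mul_nonneg h2.le h3.le))
  -- put together
  rw [setIntegral_congr_fun measurableSet_Ioi stepA, swap]
  rw [confluentPhi_eq, ← tsum_mul_left]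
  apply tsum_congr
  intro n
  have hint : ∫ ξ in Set.Ioi a, f n ξ
      = (c n * (-1)^n) * (a ^ (1 - (s+(n:ℕ))) / ((s + n - 1) * (s + n))) := by
    simp only [hf]
    rw [MeasureTheory.integral_const_mul, hgint n]
  rw [hint]
  have ha2 : a ^ (1 - (s+(n:ℕ))) = a ^ (1-s) * (1/a)^n := by
    rw [show (1 - (s+(n:ℕ)) : ℝ) = (1-s) + (-(n:ℝ)) by push_cast; ring,
      Real.rpow_add ha, Real.rpow_neg ha.le, Real.rpow_natCast, one_div, inv_pow]
  have hneg : (-(1/a))^n = (-1:ℝ)^n * (1/a)^n := by rw [neg_pow]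
  have hpid := poch_id s n
  have h2 : s + (n:ℝ) - 1 ≠ 0 := by have := hsn n; linarith
  have h3 : s + (n:ℝ) ≠ 0 := by have := hsn n; positivity
  have h4 : s - 1 ≠ 0 := by linarith
  have h5 : s ≠ 0 := by linarith
  have hP2 : P γ n ≠ 0 := (P_pos hγ n).ne'
  have hfn : (n.factorial:ℝ) ≠ 0 := by positivity
  simp only [hc]
  rw [ha2, hneg]
  rw [show (1:ℝ)+s = s+1 from add_comm 1 s]
  field_simp
  linear_combination hpid


/-- An integral identity for the confluent hypergeometric function `Φ`
(Lebedev, p. 279, Problem 21; used for the Laplace transform of Asian option prices). -/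
theorem confluentPhi_integral_identity
    (ν μ a : ℝ) (hν : 0 < ν) (hνμ : 2 < ν - μ) (ha : 0 < a) :
    ∫ ξ in Set.Ioi a, (ξ - a) * ξ ^ (-1 - (ν - μ) / 2) * Real.exp (-1 / ξ) *
        confluentPhi ((ν + μ) / 2) (1 + ν) (1 / ξ) =
      Real.Gamma ((ν - μ) / 2 - 1) / Real.Gamma ((ν - μ) / 2 + 1) *
        a ^ (1 - (ν - μ) / 2) * Real.exp (-1 / a) *
        confluentPhi ((ν + μ) / 2 + 2) (1 + ν) (1 / a) := by
  have hs : 1 < (ν - μ)/2 := by linarith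
  have hγ : 0 < 1 + ν := by linarith
  have hs1 : (ν-μ)/2 - 1 ≠ 0 := by linarith
  have hs0 : (ν-μ)/2 ≠ 0 := by linarith
  have hstep : ∀ ξ ∈ Set.Ioi a,
      (ξ - a) * ξ ^ (-1 - (ν - μ) / 2) * Real.exp (-1 / ξ) *
        confluentPhi ((ν + μ) / 2) (1 + ν) (1 / ξ)
      = (ξ - a) * ξ ^ (-1 - (ν - μ)/2) * confluentPhi (1 + (ν - μ)/2) (1 + ν) (-(1/ξ)) := by
    intro ξ hξ
    have hk := kummer hγ ((ν + μ)/2) (1/ξ)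
    rw [show (1 + ν) - (ν + μ)/2 = 1 + (ν - μ)/2 by ring] at hk
    rw [show (-1 : ℝ)/ξ = -(1/ξ) by ring]
    calc (ξ - a) * ξ ^ (-1 - (ν - μ) / 2) * Real.exp (-(1/ξ)) *
          confluentPhi ((ν + μ) / 2) (1 + ν) (1 / ξ)
        = (ξ - a) * ξ ^ (-1 - (ν - μ) / 2) *
            (Real.exp (-(1/ξ)) * confluentPhi ((ν + μ) / 2) (1 + ν) (1 / ξ)) := by ring
      _ = (ξ - a) * ξ ^ (-1 - (ν - μ)/2) * confluentPhi (1 + (ν - μ)/2) (1 + ν) (-(1/ξ)) := by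
            rw [hk]
  rw [MeasureTheory.setIntegral_congr_fun measurableSet_Ioi hstep, main_lemma hγ hs ha]
  have hk2 := kummer hγ ((ν + μ)/2 + 2) (1/a)
  rw [show (1 + ν) - ((ν + μ)/2 + 2) = (ν - μ)/2 - 1 by ring] at hk2
  rw [show (-1 : ℝ)/a = -(1/a) by ring]
  rw [show Real.Gamma ((ν-μ)/2 - 1) / Real.Gamma ((ν-μ)/2 + 1) *
        a ^ (1 - (ν-μ)/2) * Real.exp (-(1/a)) * confluentPhi ((ν+μ)/2 + 2) (1+ν) (1/a)
      = Real.Gamma ((ν-μ)/2 - 1) / Real.Gamma ((ν-μ)/2 + 1) * a ^ (1 - (ν-μ)/2) *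
        (Real.exp (-(1/a)) * confluentPhi ((ν+μ)/2 + 2) (1+ν) (1/a)) by ring, hk2]
  have hGamma : Real.Gamma ((ν-μ)/2 + 1) = ((ν-μ)/2 - 1) * ((ν-μ)/2) * Real.Gamma ((ν-μ)/2 - 1) := by
    rw [Real.Gamma_add_one hs0]
    have h := Real.Gamma_add_one hs1
    rw [sub_add_cancel] at h
    rw [h]; ring
  have hGpos : 0 < Real.Gamma ((ν-μ)/2 - 1) := Real.Gamma_pos_of_pos (by linarith)
  have hne : Real.Gamma ((ν-μ)/2 - 1) ≠ 0 := hGpos.ne'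
  have hratio : Real.Gamma ((ν-μ)/2 - 1) / Real.Gamma ((ν-μ)/2 + 1)
      = 1 / (((ν-μ)/2 - 1) * ((ν-μ)/2)) := by
    rw [hGamma, show ((ν-μ)/2 - 1) * ((ν-μ)/2) * Real.Gamma ((ν-μ)/2 - 1)
        = Real.Gamma ((ν-μ)/2 - 1) * (((ν-μ)/2 - 1) * ((ν-μ)/2)) by ring,
      div_mul_eq_div_div, div_self hne]
  rw [hratio]
  ring
end

section
/- For every integer n >= 2 and all t > 0 and r >= 0, one has ∫_0^∞ v^{(n-3)/2} e^{-v cosh(r)} theta(v, t) dv = (Gamma((n+1)/2) / (pi * sqrt(2 pi t))) * ∫_0^∞ e^{(pi^2 - b^2)/(2t)} sinh(b) sin(pi b / t) (cosh(b) + cosh(r))^{-(n+1)/2} db. (This analytic identity converts the Hartman–Watson integral representation of the heat kernel on n-dimensional hyperbolic space into Gruet's formula.) -/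
open MeasureTheory ProbabilityTheory Filter

/-- The (unnormalized) Hartman–Watson density function `θ(r, t)`. -/
noncomputable def hwTheta (r t : ℝ) : ℝ :=
  r / Real.sqrt (2 * Real.pi ^ 3 * t) * Real.exp (Real.pi ^ 2 / (2 * t)) *
    ∫ ξ in Set.Ioi (0:ℝ),
      Real.exp (-ξ ^ 2 / (2 * t)) * Real.exp (-r * Real.cosh ξ) * Real.sinh ξ *
        Real.sin (Real.pi * ξ / t)

open Set Function

/-- Auxiliary integrand for Gruet's formula. -/
noncomputable def gruetF (n : ℕ) (t r : ℝ) (v ξ : ℝ) : ℝ :=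
  v ^ (((n : ℝ) + 1) / 2 - 1) * Real.exp (-v * Real.cosh r) *
    (Real.exp (-ξ ^ 2 / (2 * t)) * Real.exp (-v * Real.cosh ξ) * Real.sinh ξ *
      Real.sin (Real.pi * ξ / t))

lemma gruetF_integrable (n : ℕ) (hn : 2 ≤ n) (t r : ℝ) (ht : 0 < t) :
    Integrable (uncurry (gruetF n t r))
      ((volume.restrict (Ioi (0:ℝ))).prod (volume.restrict (Ioi (0:ℝ)))) := by
  have hq : (0:ℝ) ≤ ((n : ℝ) + 1) / 2 - 1 := by
    have : (2:ℝ) ≤ (n:ℝ) := by exact_mod_cast hn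
    linarith
  have hg : IntegrableOn (fun v : ℝ => v ^ (((n : ℝ) + 1) / 2 - 1) * Real.exp (-2 * v))
      (Ioi 0) := by
    have := integrableOn_rpow_mul_exp_neg_mul_rpow (s := ((n : ℝ) + 1) / 2 - 1) (p := 1)
      (b := 2) (by linarith) one_pos two_pos
    simpa using this
  have hh : IntegrableOn (fun ξ : ℝ => Real.exp (-ξ ^ 2 / (2 * t)) * Real.sinh ξ) (Ioi 0) := by
    refine Integrable.mono' (g := fun ξ : ℝ => (Real.exp t / 2) * Real.exp (-(1/(4*t)) * ξ ^ 2))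
      ?_ ?_ ?_
    · exact ((integrable_exp_neg_mul_sq (by positivity)).const_mul _).restrict
    · exact ((Real.continuous_exp.comp (by continuity)).mul
        Real.continuous_sinh).aestronglyMeasurable
    · filter_upwards [ae_restrict_mem measurableSet_Ioi] with ξ hξ
      have hξ0 : (0:ℝ) < ξ := hξ
      have hs : (0:ℝ) ≤ Real.sinh ξ := Real.sinh_nonneg_iff.2 hξ0.le
      rw [Real.norm_eq_abs, abs_of_nonneg (by positivity)]
      have h1 : Real.sinh ξ ≤ Real.exp ξ / 2 := by
        rw [Real.sinh_eq]
        have := Real.exp_pos (-ξ)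
        linarith
      calc Real.exp (-ξ ^ 2 / (2 * t)) * Real.sinh ξ
          ≤ Real.exp (-ξ ^ 2 / (2 * t)) * (Real.exp ξ / 2) := by
            exact mul_le_mul_of_nonneg_left h1 (Real.exp_pos _).le
        _ = (1/2) * Real.exp (-ξ ^ 2 / (2 * t) + ξ) := by rw [Real.exp_add]; ring
        _ ≤ (1/2) * Real.exp (t + (-(1/(4*t)) * ξ ^ 2)) := by
            have h4t : (0:ℝ) < 4 * t := by linarith
            have key : ξ - t ≤ ξ ^ 2 / (4 * t) := by
              rw [le_div_iff₀ h4t]; nlinarith [sq_nonneg (ξ - 2*t)]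
            have : -ξ ^ 2 / (2 * t) + ξ ≤ t + (-(1/(4*t)) * ξ ^ 2) := by
              have h1' : -ξ ^ 2 / (2 * t) = -(2 * (ξ ^ 2 / (4 * t))) := by
                field_simp; ring
              have h2' : -(1/(4*t)) * ξ ^ 2 = -(ξ ^ 2 / (4 * t)) := by ring
              rw [h1', h2']; linarith
            exact mul_le_mul_of_nonneg_left (Real.exp_le_exp.2 this) (by norm_num)
        _ = (Real.exp t / 2) * Real.exp (-(1/(4*t)) * ξ ^ 2) := by rw [Real.exp_add]; ring
  refine Integrable.mono' (g := fun z : ℝ × ℝ =>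
      (z.1 ^ (((n : ℝ) + 1) / 2 - 1) * Real.exp (-2 * z.1)) *
        (Real.exp (-z.2 ^ 2 / (2 * t)) * Real.sinh z.2)) (hg.mul_prod hh) ?_ ?_
  · apply Continuous.aestronglyMeasurable
    unfold uncurry gruetF
    have c1 : Continuous fun z : ℝ × ℝ => z.1 ^ (((n : ℝ) + 1) / 2 - 1) :=
      (Real.continuous_rpow_const hq).comp continuous_fst
    have c2 : Continuous fun z : ℝ × ℝ => Real.exp (-z.1 * Real.cosh r) :=
      Real.continuous_exp.comp (continuous_fst.neg.mul continuous_const)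
    have c3 : Continuous fun z : ℝ × ℝ => Real.exp (-z.2 ^ 2 / (2 * t)) :=
      Real.continuous_exp.comp (((continuous_snd.pow 2).neg).div_const _)
    have c4 : Continuous fun z : ℝ × ℝ => Real.exp (-z.1 * Real.cosh z.2) :=
      Real.continuous_exp.comp (continuous_fst.neg.mul (Real.continuous_cosh.comp continuous_snd))
    have c5 : Continuous fun z : ℝ × ℝ => Real.sinh z.2 := Real.continuous_sinh.comp continuous_snd
    have c6 : Continuous fun z : ℝ × ℝ => Real.sin (Real.pi * z.2 / t) :=
      Real.continuous_sin.comp ((continuous_const.mul continuous_snd).div_const _)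
    exact (c1.mul c2).mul (((c3.mul c4).mul c5).mul c6)
  · rw [Measure.prod_restrict]
    filter_upwards [ae_restrict_mem (measurableSet_Ioi.prod measurableSet_Ioi)] with z hz
    obtain ⟨hv, hξ⟩ := hz
    have hv0 : (0:ℝ) < z.1 := hv
    have hξ0 : (0:ℝ) < z.2 := hξ
    have hs : (0:ℝ) ≤ Real.sinh z.2 := Real.sinh_nonneg_iff.2 hξ0.le
    have e1 : Real.exp (-z.1 * Real.cosh r) ≤ Real.exp (-z.1) := by
      apply Real.exp_le_exp.2; nlinarith [Real.one_le_cosh r]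
    have e2 : Real.exp (-z.1 * Real.cosh z.2) ≤ Real.exp (-z.1) := by
      apply Real.exp_le_exp.2; nlinarith [Real.one_le_cosh z.2]
    have hsin : |Real.sin (Real.pi * z.2 / t)| ≤ 1 := Real.abs_sin_le_one _
    rw [uncurry, gruetF]
    rw [Real.norm_eq_abs, abs_mul, abs_mul, abs_mul, abs_mul, abs_mul,
      abs_of_nonneg (Real.rpow_nonneg hv0.le _), abs_of_nonneg (Real.exp_pos _).le,
      abs_of_nonneg (Real.exp_pos _).le, abs_of_nonneg (Real.exp_pos _).le,
      abs_of_nonneg hs]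
    have key : z.1 ^ (((n : ℝ) + 1) / 2 - 1) * Real.exp (-z.1) *
        (Real.exp (-z.2 ^ 2 / (2 * t)) * Real.exp (-z.1) * Real.sinh z.2 * 1)
        = z.1 ^ (((n : ℝ) + 1) / 2 - 1) * Real.exp (-2 * z.1) *
          (Real.exp (-z.2 ^ 2 / (2 * t)) * Real.sinh z.2) := by
      rw [show Real.exp (-2 * z.1) = Real.exp (-z.1) * Real.exp (-z.1) by
        rw [← Real.exp_add]; ring_nf]
      ring
    calc z.1 ^ (((n : ℝ) + 1) / 2 - 1) * Real.exp (-z.1 * Real.cosh r) *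
        (Real.exp (-z.2 ^ 2 / (2 * t)) * Real.exp (-z.1 * Real.cosh z.2) * Real.sinh z.2 *
          |Real.sin (Real.pi * z.2 / t)|)
        ≤ z.1 ^ (((n : ℝ) + 1) / 2 - 1) * Real.exp (-z.1) *
          (Real.exp (-z.2 ^ 2 / (2 * t)) * Real.exp (-z.1) * Real.sinh z.2 * 1) := by
          gcongr <;> positivity
      _ = _ := key

/-- The analytic identity converting the Hartman–Watson representation of the hyperbolic
heat kernel into Gruet's formula. -/
theorem gruet_formula_identity (n : ℕ) (hn : 2 ≤ n) (t r : ℝ) (ht : 0 < t) (hr : 0 ≤ r) :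
    ∫ v in Set.Ioi (0:ℝ),
        v ^ (((n : ℝ) - 3) / 2) * Real.exp (-v * Real.cosh r) * hwTheta v t =
      Real.Gamma (((n : ℝ) + 1) / 2) / (Real.pi * Real.sqrt (2 * Real.pi * t)) *
        ∫ b in Set.Ioi (0:ℝ),
          Real.exp ((Real.pi ^ 2 - b ^ 2) / (2 * t)) * Real.sinh b *
            Real.sin (Real.pi * b / t) *
            (Real.cosh b + Real.cosh r) ^ (-(((n : ℝ) + 1) / 2)) := by
  have hπ := Real.pi_pos
  have hA : (0:ℝ) < ((n : ℝ) + 1) / 2 := by positivity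
  have hS0 : (0:ℝ) < Real.sqrt (2 * Real.pi ^ 3 * t) := Real.sqrt_pos.2 (by positivity)
  have hS : Real.sqrt (2 * Real.pi ^ 3 * t) = Real.pi * Real.sqrt (2 * Real.pi * t) := by
    rw [show 2 * Real.pi ^ 3 * t = Real.pi ^ 2 * (2 * Real.pi * t) by ring,
      Real.sqrt_mul (sq_nonneg _), Real.sqrt_sq hπ.le]
  set E := Real.exp (Real.pi ^ 2 / (2 * t)) with hE
  set S := Real.sqrt (2 * Real.pi ^ 3 * t) with hSdef
  -- step 1 : rewrite the integrand in v
  have h1 : ∀ v ∈ Ioi (0:ℝ),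
      v ^ (((n : ℝ) - 3) / 2) * Real.exp (-v * Real.cosh r) * hwTheta v t
        = (E / S) * ∫ ξ in Ioi (0:ℝ), gruetF n t r v ξ := by
    intro v hv
    have hv0 : (0:ℝ) < v := hv
    have hI : (∫ ξ in Ioi (0:ℝ), gruetF n t r v ξ)
        = (v ^ (((n : ℝ) + 1) / 2 - 1) * Real.exp (-v * Real.cosh r)) *
          ∫ ξ in Ioi (0:ℝ), Real.exp (-ξ ^ 2 / (2 * t)) * Real.exp (-v * Real.cosh ξ) *
            Real.sinh ξ * Real.sin (Real.pi * ξ / t) := by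
      rw [← integral_const_mul]
      rfl
    have hvq : v ^ (((n : ℝ) + 1) / 2 - 1) = v ^ (((n : ℝ) - 3) / 2) * v := by
      rw [show ((n : ℝ) + 1) / 2 - 1 = ((n : ℝ) - 3) / 2 + 1 by ring,
        Real.rpow_add_one hv0.ne']
    rw [hwTheta, hI, hvq, ← hSdef, ← hE]
    rw [div_eq_mul_inv, div_eq_mul_inv]
    ring
  have hint := gruetF_integrable n hn t r ht
  have hswap : (∫ v in Ioi (0:ℝ), ∫ ξ in Ioi (0:ℝ), gruetF n t r v ξ)
      = ∫ ξ in Ioi (0:ℝ), ∫ v in Ioi (0:ℝ), gruetF n t r v ξ :=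
    integral_integral_swap hint
  -- step 2 : compute the inner v-integral
  have h4 : ∀ ξ ∈ Ioi (0:ℝ), (∫ v in Ioi (0:ℝ), gruetF n t r v ξ)
      = Real.Gamma (((n : ℝ) + 1) / 2) *
        (Real.exp (-ξ ^ 2 / (2 * t)) * Real.sinh ξ * Real.sin (Real.pi * ξ / t) *
          (Real.cosh ξ + Real.cosh r) ^ (-(((n : ℝ) + 1) / 2))) := by
    intro ξ _
    have hc : (0:ℝ) < Real.cosh ξ + Real.cosh r := by
      have h1 := Real.cosh_pos (x := ξ)
      have h2 := Real.cosh_pos (x := r)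
      linarith
    have hrw : (fun v => gruetF n t r v ξ) = fun v =>
        (v ^ (((n : ℝ) + 1) / 2 - 1) *
          Real.exp (-((Real.cosh ξ + Real.cosh r) * v))) *
          (Real.exp (-ξ ^ 2 / (2 * t)) * Real.sinh ξ * Real.sin (Real.pi * ξ / t)) := by
      funext v
      rw [gruetF, show Real.exp (-((Real.cosh ξ + Real.cosh r) * v))
          = Real.exp (-v * Real.cosh r) * Real.exp (-v * Real.cosh ξ) by
        rw [← Real.exp_add]; congr 1; ring]
      ring
    rw [hrw, integral_mul_const, Real.integral_rpow_mul_exp_neg_mul_Ioi hA hc,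
      one_div, Real.inv_rpow hc.le, ← Real.rpow_neg hc.le]
    ring
  calc (∫ v in Ioi (0:ℝ),
        v ^ (((n : ℝ) - 3) / 2) * Real.exp (-v * Real.cosh r) * hwTheta v t)
      = ∫ v in Ioi (0:ℝ), (E / S) * ∫ ξ in Ioi (0:ℝ), gruetF n t r v ξ :=
        setIntegral_congr_fun measurableSet_Ioi h1
    _ = (E / S) * ∫ v in Ioi (0:ℝ), ∫ ξ in Ioi (0:ℝ), gruetF n t r v ξ :=
        integral_const_mul _ _
    _ = (E / S) * ∫ ξ in Ioi (0:ℝ), ∫ v in Ioi (0:ℝ), gruetF n t r v ξ := by rw [hswap]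
    _ = (E / S) * ∫ ξ in Ioi (0:ℝ), Real.Gamma (((n : ℝ) + 1) / 2) *
          (Real.exp (-ξ ^ 2 / (2 * t)) * Real.sinh ξ * Real.sin (Real.pi * ξ / t) *
            (Real.cosh ξ + Real.cosh r) ^ (-(((n : ℝ) + 1) / 2))) := by
        rw [setIntegral_congr_fun measurableSet_Ioi h4]
    _ = (E / S) * (Real.Gamma (((n : ℝ) + 1) / 2) *
          ∫ ξ in Ioi (0:ℝ), Real.exp (-ξ ^ 2 / (2 * t)) * Real.sinh ξ *
            Real.sin (Real.pi * ξ / t) *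
            (Real.cosh ξ + Real.cosh r) ^ (-(((n : ℝ) + 1) / 2))) := by
        rw [integral_const_mul]
    _ = Real.Gamma (((n : ℝ) + 1) / 2) / (Real.pi * Real.sqrt (2 * Real.pi * t)) *
        ∫ b in Set.Ioi (0:ℝ),
          Real.exp ((Real.pi ^ 2 - b ^ 2) / (2 * t)) * Real.sinh b *
            Real.sin (Real.pi * b / t) *
            (Real.cosh b + Real.cosh r) ^ (-(((n : ℝ) + 1) / 2)) := by
        have hcongr : ∀ b ∈ Ioi (0:ℝ),
            Real.exp ((Real.pi ^ 2 - b ^ 2) / (2 * t)) * Real.sinh b *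
              Real.sin (Real.pi * b / t) *
              (Real.cosh b + Real.cosh r) ^ (-(((n : ℝ) + 1) / 2))
            = E * (Real.exp (-b ^ 2 / (2 * t)) * Real.sinh b * Real.sin (Real.pi * b / t) *
              (Real.cosh b + Real.cosh r) ^ (-(((n : ℝ) + 1) / 2))) := by
          intro b _
          rw [show (Real.pi ^ 2 - b ^ 2) / (2 * t)
            = Real.pi ^ 2 / (2 * t) + -b ^ 2 / (2 * t) by ring, Real.exp_add, ← hE]
          ring
        rw [setIntegral_congr_fun measurableSet_Ioi hcongr, integral_const_mul, hS,
          div_eq_mul_inv, div_eq_mul_inv, mul_inv]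
        ring
end

section
/- Let mu in R and fix t > 0. Then the three random variables exp(-2 B_t^{(mu)}) * A_t^{(mu)}, ∫_0^t exp(-2 B_s^{(mu)}) ds, and ∫_0^t exp(2 B_s^{(-mu)}) ds all have the same distribution. -/
open MeasureTheory ProbabilityTheory Filter

set_option linter.unusedSectionVars false

namespace XiAux


variable {Ω : Type*} [MeasurableSpace Ω] {P : Measure Ω} [IsProbabilityMeasure P]

lemma map_pi_of_indep {n : ℕ} {V : Fin n → Ω → ℝ} (hm : ∀ i, Measurable (V i))
    (h : iIndepFun V P) {μ0 : Measure ℝ} [IsProbabilityMeasure μ0]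
    (hl : ∀ i, Measure.map (V i) P = μ0) :
    Measure.map (fun ω i => V i ω) P = Measure.pi (fun _ : Fin n => μ0) := by
  refine (Measure.pi_eq fun s hs => ?_).symm
  rw [Measure.map_apply (measurable_pi_lambda _ hm) (MeasurableSet.univ_pi hs)]
  have hpre : (fun ω i => V i ω) ⁻¹' Set.pi Set.univ s = ⋂ i, V i ⁻¹' s i := by
    ext ω; simp [Set.mem_pi]
  rw [hpre, h.meas_iInter fun i => ⟨s i, hs i, rfl⟩]
  refine Finset.prod_congr rfl fun i _ => ?_
  rw [← hl i, Measure.map_apply (hm i) (hs i)]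

lemma map_perm_pi {n : ℕ} {V : Ω → Fin n → ℝ} (hVm : Measurable V)
    {μ0 : Measure ℝ} [IsProbabilityMeasure μ0]
    (hlaw : Measure.map V P = Measure.pi (fun _ : Fin n => μ0)) (e : Equiv.Perm (Fin n)) :
    Measure.map (fun ω j => V ω (e j)) P = Measure.pi (fun _ : Fin n => μ0) := by
  have hc : Measurable (fun v : Fin n → ℝ => fun j => v (e j)) :=
    measurable_pi_lambda _ fun j => measurable_pi_apply _
  have hcomp : (fun ω j => V ω (e j)) = (fun v : Fin n → ℝ => fun j => v (e j)) ∘ V := rfl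
  rw [hcomp, ← Measure.map_map hc hVm, hlaw]
  refine (Measure.pi_eq fun s hs => ?_).symm
  rw [Measure.map_apply hc (MeasurableSet.univ_pi hs)]
  have hpre : (fun v : Fin n → ℝ => fun j => v (e j)) ⁻¹' Set.pi Set.univ s
      = Set.pi Set.univ (fun i => s (e.symm i)) := by
    ext v
    simp only [Set.mem_preimage, Set.mem_pi, Set.mem_univ, true_implies]
    constructor
    · intro h i; have := h (e.symm i); simpa using this
    · intro h j; simpa using h (e j)
  rw [hpre, Measure.pi_pi]
  exact Equiv.prod_comp e.symm fun i => μ0 (s i)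

lemma gauss_map_neg (v : NNReal) :
    Measure.map (fun x : ℝ => -x) (gaussianReal 0 v) = gaussianReal 0 v := by
  have h := gaussianReal_map_const_mul (μ := 0) (v := v) (-1)
  simp only [neg_one_mul, mul_zero] at h
  rw [h]
  congr 1
  ext
  norm_num

lemma map_eq_of_tendsto {Zn Z'n : ℕ → Ω → ℝ} {Z Z' : Ω → ℝ}
    (hZn : ∀ n, Measurable (Zn n)) (hZ'n : ∀ n, Measurable (Z'n n))
    (hlaw : ∀ n, Measure.map (Zn n) P = Measure.map (Z'n n) P)
    (hZ : ∀ ω, Tendsto (fun n => Zn n ω) atTop (nhds (Z ω)))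
    (hZ' : ∀ ω, Tendsto (fun n => Z'n n ω) atTop (nhds (Z' ω))) :
    Measure.map Z P = Measure.map Z' P := by
  have hZm : Measurable Z :=
    measurable_of_tendsto_metrizable hZn (tendsto_pi_nhds.2 hZ)
  have hZ'm : Measurable Z' :=
    measurable_of_tendsto_metrizable hZ'n (tendsto_pi_nhds.2 hZ')
  haveI : IsProbabilityMeasure (Measure.map Z P) := Measure.isProbabilityMeasure_map hZm.aemeasurable
  refine ext_of_forall_lintegral_eq_of_IsFiniteMeasure fun f => ?_
  have key : ∀ (W : Ω → ℝ), Measurable W →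
      ∫⁻ x, f x ∂(Measure.map W P) = ∫⁻ ω, f (W ω) ∂P := fun W hW => by
    rw [lintegral_map (by fun_prop) hW]
  have tends : ∀ (Wn : ℕ → Ω → ℝ) (W : Ω → ℝ), (∀ n, Measurable (Wn n)) →
      (∀ ω, Tendsto (fun n => Wn n ω) atTop (nhds (W ω))) →
      Tendsto (fun n => ∫⁻ ω, (f (Wn n ω) : ENNReal) ∂P) atTop
        (nhds (∫⁻ ω, (f (W ω) : ENNReal) ∂P)) := by
    intro Wn W hWn hW0
    refine tendsto_lintegral_of_dominated_convergence (fun _ => ((nndist f 0 : NNReal) : ENNReal))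
      (fun n => by fun_prop) (fun n => Eventually.of_forall fun ω => ?_)
      (by simpa using edist_ne_top f 0) ?_
    · show (f (Wn n ω) : ENNReal) ≤ ((nndist f 0 : NNReal) : ENNReal)
      exact ENNReal.coe_le_coe.2 (BoundedContinuousFunction.NNReal.upper_bound f (Wn n ω))
    · exact Eventually.of_forall fun ω =>
        ENNReal.tendsto_coe.2 ((f.continuous.tendsto _).comp (hW0 ω))
  rw [key Z hZm, key Z' hZ'm]
  refine tendsto_nhds_unique ?_ (tends Z'n Z' hZ'n hZ')
  have heq : (fun n => ∫⁻ ω, (f (Zn n ω) : ENNReal) ∂P)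
      = fun n => ∫⁻ ω, (f (Z'n n ω) : ENNReal) ∂P := by
    funext n
    rw [← key (Zn n) (hZn n), ← key (Z'n n) (hZ'n n), hlaw n]
  rw [← heq]
  exact tends Zn Z hZn hZ



noncomputable def gridPt (t : ℝ) (n k : ℕ) : ℝ := (k : ℝ) * t / n

lemma gridPt_zero (t : ℝ) (n : ℕ) : gridPt t n 0 = 0 := by simp [gridPt]

lemma gridPt_self {t : ℝ} {n : ℕ} (hn : n ≠ 0) : gridPt t n n = t := by
  have : (n : ℝ) ≠ 0 := Nat.cast_ne_zero.2 hn
  unfold gridPt; exact mul_div_cancel_left₀ t this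

lemma gridPt_mono {t : ℝ} (ht : 0 ≤ t) (n : ℕ) : Monotone (gridPt t n) := by
  intro a b hab
  unfold gridPt
  rw [div_eq_mul_inv, div_eq_mul_inv]
  exact mul_le_mul_of_nonneg_right
    (mul_le_mul_of_nonneg_right (Nat.cast_le.2 hab) ht)
    (inv_nonneg.2 (Nat.cast_nonneg n))

lemma gridPt_nonneg {t : ℝ} (ht : 0 ≤ t) (n k : ℕ) : 0 ≤ gridPt t n k := by
  unfold gridPt; positivity

lemma gridPt_diff (t : ℝ) (n k : ℕ) : gridPt t n (k + 1) - gridPt t n k = t / n := by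
  unfold gridPt; push_cast; ring

lemma gridPt_le_t {t : ℝ} (ht : 0 ≤ t) {n k : ℕ} (hk : k ≤ n) (hn : n ≠ 0) :
    gridPt t n k ≤ t := by
  calc gridPt t n k ≤ gridPt t n n := gridPt_mono ht n hk
  _ = t := gridPt_self hn

/-- Convergence of Riemann sums with sample points `a n k ∈ [k t/n, (k+1) t/n]`. -/
lemma riemann {t : ℝ} (ht : 0 < t) (f : ℝ → ℝ) (hf : Continuous f)
    (a : ℕ → ℕ → ℝ)
    (ha : ∀ n k, k < n → gridPt t n k ≤ a n k ∧ a n k ≤ gridPt t n (k + 1)) :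
    Tendsto (fun n => ∑ k ∈ Finset.range n, t / n * f (a n k)) atTop
      (nhds (∫ s in (0:ℝ)..t, f s)) := by
  rw [Metric.tendsto_atTop]
  intro ε hε
  -- uniform continuity on [0, t]
  have huc : UniformContinuousOn f (Set.Icc 0 t) :=
    (isCompact_Icc).uniformContinuousOn_of_continuous hf.continuousOn
  rw [Metric.uniformContinuousOn_iff] at huc
  have hε2 : 0 < ε / (2 * t) := by positivity
  obtain ⟨δ, hδ, hδf⟩ := huc (ε / (2 * t)) hε2
  -- choose N
  have htd : Tendsto (fun n : ℕ => t / n) atTop (nhds 0) :=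
    tendsto_const_div_atTop_nhds_zero_nat t
  have hev : ∀ᶠ n : ℕ in atTop, t / n < δ := htd.eventually (gt_mem_nhds hδ)
  obtain ⟨N0, hN0⟩ := eventually_atTop.1 hev
  refine ⟨max N0 1, fun n hn => ?_⟩
  have hn0 : n ≠ 0 := by omega
  have hnpos : (0:ℝ) < n := by exact_mod_cast Nat.pos_of_ne_zero hn0
  have htn : t / n < δ := hN0 n (le_trans (le_max_left _ _) hn)
  have hint : ∀ k < n, IntervalIntegrable f MeasureTheory.volume (gridPt t n k) (gridPt t n (k+1)) :=
    fun k _ => hf.intervalIntegrable _ _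
  have hsplit : (∫ s in (0:ℝ)..t, f s)
      = ∑ k ∈ Finset.range n, ∫ s in gridPt t n k..gridPt t n (k+1), f s := by
    rw [intervalIntegral.sum_integral_adjacent_intervals hint, gridPt_zero, gridPt_self hn0]
  rw [Real.dist_eq, hsplit, ← Finset.sum_sub_distrib]
  have hterm : ∀ k ∈ Finset.range n,
      |t / n * f (a n k) - ∫ s in gridPt t n k..gridPt t n (k+1), f s| ≤ ε / (2 * t) * (t / n) := by
    intro k hk
    have hkn : k < n := Finset.mem_range.1 hk
    have hconst : t / n * f (a n k) = ∫ _ in gridPt t n k..gridPt t n (k+1), f (a n k) := by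
      rw [intervalIntegral.integral_const, smul_eq_mul, gridPt_diff]
    rw [hconst, ← intervalIntegral.integral_sub (intervalIntegrable_const) (hint k hkn)]
    have hbound : ∀ s ∈ Set.uIoc (gridPt t n k) (gridPt t n (k+1)),
        ‖f (a n k) - f s‖ ≤ ε / (2 * t) := by
      intro s hs
      have hmono := gridPt_mono ht.le n (Nat.le_succ k)
      rw [Set.uIoc_of_le hmono] at hs
      have hs1 : gridPt t n k < s := hs.1
      have hs2 : s ≤ gridPt t n (k+1) := hs.2
      have hak := ha n k hkn
      have hsIcc : s ∈ Set.Icc 0 t :=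
        ⟨le_trans (gridPt_nonneg ht.le n k) hs1.le, le_trans hs2 (gridPt_le_t ht.le hkn hn0)⟩
      have haIcc : a n k ∈ Set.Icc 0 t :=
        ⟨le_trans (gridPt_nonneg ht.le n k) hak.1, le_trans hak.2 (gridPt_le_t ht.le hkn hn0)⟩
      have hdist : dist (a n k) s < δ := by
        rw [Real.dist_eq]
        have h1 : a n k - s ≤ t / n := by
          have := gridPt_diff t n k
          have := hs1
          nlinarith [hak.2, hs1, gridPt_diff t n k]
        have h2 : s - a n k ≤ t / n := by
          nlinarith [hak.1, hs2, gridPt_diff t n k]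
        have : |a n k - s| ≤ t / n := abs_le.2 ⟨by linarith, h1⟩
        linarith
      exact (hδf _ haIcc _ hsIcc hdist).le
    have := intervalIntegral.norm_integral_le_of_norm_le_const hbound
    rw [Real.norm_eq_abs] at this
    calc |∫ s in gridPt t n k..gridPt t n (k+1), (f (a n k) - f s)| ≤
        ε / (2 * t) * |gridPt t n (k+1) - gridPt t n k| := this
      _ = ε / (2 * t) * (t / n) := by
          rw [gridPt_diff]
          congr 1
          exact abs_of_nonneg (by positivity)
  calc |∑ k ∈ Finset.range n,
        (t / n * f (a n k) - ∫ s in gridPt t n k..gridPt t n (k+1), f s)|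
      ≤ ∑ k ∈ Finset.range n,
        |t / n * f (a n k) - ∫ s in gridPt t n k..gridPt t n (k+1), f s| :=
        Finset.abs_sum_le_sum_abs _ _
    _ ≤ ∑ _k ∈ Finset.range n, ε / (2 * t) * (t / n) := Finset.sum_le_sum hterm
    _ = n * (ε / (2 * t) * (t / n)) := by rw [Finset.sum_const, Finset.card_range, nsmul_eq_mul]
    _ = ε / 2 := by field_simp
    _ < ε := by linarith



noncomputable def psum {n : ℕ} (v : Fin n → ℝ) (m : ℕ) : ℝ :=
  ∑ j : Fin n, if (j : ℕ) < m then v j else 0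

lemma continuous_psum {n m : ℕ} : Continuous fun v : Fin n → ℝ => psum v m := by
  refine continuous_finset_sum _ fun j _ => ?_
  by_cases h : (j : ℕ) < m
  · simp only [if_pos h]; exact continuous_apply j
  · simp only [if_neg h]; exact continuous_const

lemma psum_neg {n : ℕ} (v : Fin n → ℝ) (m : ℕ) : psum (fun j => -v j) m = -psum v m := by
  unfold psum
  rw [← Finset.sum_neg_distrib]
  refine Finset.sum_congr rfl fun j _ => ?_
  by_cases h : (j : ℕ) < m <;> simp [h]

lemma psum_full {n : ℕ} (v : Fin n → ℝ) : psum v n = ∑ j : Fin n, v j := by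
  unfold psum
  exact Finset.sum_congr rfl fun j _ => if_pos j.isLt

lemma psum_rev {n : ℕ} (v : Fin n → ℝ) (m : ℕ) (hm : m ≤ n) :
    psum (fun j => v (Fin.rev j)) m = psum v n - psum v (n - m) := by
  unfold psum
  have h1 : (∑ j : Fin n, if (j : ℕ) < m then v (Fin.rev j) else 0)
      = ∑ j : Fin n, if (Fin.rev j : ℕ) < m then v j else 0 := by
    rw [← Equiv.sum_comp Fin.revPerm (fun j => if (Fin.rev j : ℕ) < m then v j else 0)]
    simp [Fin.rev_rev]
  rw [h1]
  have h2 : ∀ j : Fin n, (if (Fin.rev j : ℕ) < m then v j else 0)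
      = v j - (if (j : ℕ) < n - m then v j else 0) := by
    intro j
    rw [Fin.val_rev]
    have hj := j.isLt
    by_cases h : n - ((j : ℕ) + 1) < m
    · rw [if_pos h, if_neg (by omega)]; ring
    · rw [if_neg h, if_pos (by omega)]; ring
  calc (∑ j : Fin n, if (Fin.rev j : ℕ) < m then v j else 0)
      = ∑ j : Fin n, (v j - if (j : ℕ) < n - m then v j else 0) :=
        Finset.sum_congr rfl fun j _ => h2 j
    _ = (∑ j : Fin n, v j) - ∑ j : Fin n, (if (j : ℕ) < n - m then v j else 0) :=
        Finset.sum_sub_distrib _ _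
    _ = _ := by
        have := psum_full v
        unfold psum at this
        rw [this]

/-- Telescoping: the partial sums of increments of `g` recover `g`. -/
lemma psum_increments {n m : ℕ} (hm : m ≤ n) (g : ℕ → ℝ) (hg0 : g 0 = 0) :
    psum (fun j : Fin n => g ((j : ℕ) + 1) - g (j : ℕ)) m = g m := by
  unfold psum
  rw [Fin.sum_univ_eq_sum_range (fun j => if j < m then g (j + 1) - g j else 0) n]
  rw [← Finset.sum_filter]
  have hfilt : (Finset.range n).filter (fun j => j < m) = Finset.range m := by
    ext j; simp; omega
  rw [hfilt, Finset.sum_range_sub (fun j => g j), hg0, sub_zero]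


noncomputable def Gr (mu t : ℝ) (n : ℕ) (v : Fin n → ℝ) : ℝ :=
  ∑ k ∈ Finset.range n, t / n * Real.exp (-2 * (psum v (k+1) + mu * gridPt t n (k+1)))

noncomputable def Gl (mu t : ℝ) (n : ℕ) (v : Fin n → ℝ) : ℝ :=
  ∑ k ∈ Finset.range n, t / n * Real.exp (2 * (psum v k + (-mu) * gridPt t n k))

lemma continuous_Gr (mu t : ℝ) (n : ℕ) : Continuous (Gr mu t n) := by
  unfold Gr
  refine continuous_finset_sum _ fun k _ => ?_
  exact continuous_const.mul
    (Real.continuous_exp.comp (continuous_const.mul (continuous_psum.add continuous_const)))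

lemma continuous_Gl (mu t : ℝ) (n : ℕ) : Continuous (Gl mu t n) := by
  unfold Gl
  refine continuous_finset_sum _ fun k _ => ?_
  exact continuous_const.mul
    (Real.continuous_exp.comp (continuous_const.mul (continuous_psum.add continuous_const)))

lemma psum_path {n m : ℕ} (hm : m ≤ n) (W : ℝ → ℝ) (t : ℝ) (hW0 : W 0 = 0) :
    psum (fun j : Fin n => W (gridPt t n ((j : ℕ) + 1)) - W (gridPt t n (j : ℕ))) m
      = W (gridPt t n m) :=
  psum_increments hm (fun i => W (gridPt t n i)) (by show W (gridPt t n 0) = 0; rw [gridPt_zero]; exact hW0)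

lemma gridPt_compl {t : ℝ} {n k : ℕ} (hk : k < n) :
    gridPt t n (n - (k + 1)) = t - gridPt t n (k + 1) := by
  have hn : (n : ℝ) ≠ 0 := Nat.cast_ne_zero.2 (by omega)
  unfold gridPt
  rw [Nat.cast_sub (by omega : k + 1 ≤ n)]
  field_simp

lemma Gr_apply (mu t : ℝ) (n : ℕ) (W : ℝ → ℝ) (hW0 : W 0 = 0) :
    Gr mu t n (fun j : Fin n => W (gridPt t n ((j : ℕ) + 1)) - W (gridPt t n (j : ℕ)))
      = ∑ k ∈ Finset.range n,
          t / n * Real.exp (-2 * (W (gridPt t n (k+1)) + mu * gridPt t n (k+1))) := by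
  unfold Gr
  refine Finset.sum_congr rfl fun k hk => ?_
  rw [psum_path (Finset.mem_range.1 hk) W t hW0]

lemma Gl_apply (mu t : ℝ) (n : ℕ) (W : ℝ → ℝ) (hW0 : W 0 = 0) :
    Gl mu t n (fun j : Fin n => W (gridPt t n ((j : ℕ) + 1)) - W (gridPt t n (j : ℕ)))
      = ∑ k ∈ Finset.range n,
          t / n * Real.exp (2 * (W (gridPt t n k) + (-mu) * gridPt t n k)) := by
  unfold Gl
  refine Finset.sum_congr rfl fun k hk => ?_
  rw [psum_path (Finset.mem_range.1 hk).le W t hW0]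

lemma Gl_apply_neg (mu t : ℝ) (n : ℕ) (W : ℝ → ℝ) (hW0 : W 0 = 0) :
    Gl mu t n (fun j : Fin n => -(W (gridPt t n ((j : ℕ) + 1)) - W (gridPt t n (j : ℕ))))
      = ∑ k ∈ Finset.range n,
          t / n * Real.exp (-2 * (W (gridPt t n k) + mu * gridPt t n k)) := by
  unfold Gl
  refine Finset.sum_congr rfl fun k hk => ?_
  have h := psum_neg (fun j : Fin n => W (gridPt t n ((j : ℕ) + 1)) - W (gridPt t n (j : ℕ))) k
  rw [h, psum_path (Finset.mem_range.1 hk).le W t hW0]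
  congr 1
  ring

lemma Gr_apply_rev (mu : ℝ) {t : ℝ} (ht : 0 < t) (n : ℕ) (W : ℝ → ℝ) (hW0 : W 0 = 0) :
    Gr mu t n (fun j : Fin n =>
        W (gridPt t n ((Fin.rev j : ℕ) + 1)) - W (gridPt t n (Fin.rev j : ℕ)))
      = ∑ k ∈ Finset.range n,
          t / n * Real.exp (2 * (W (gridPt t n k) - W t) + 2 * mu * (gridPt t n k - t)) := by
  unfold Gr
  rw [← Finset.sum_range_reflect
    (fun k => t / n * Real.exp (2 * (W (gridPt t n k) - W t) + 2 * mu * (gridPt t n k - t))) n]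
  refine Finset.sum_congr rfl fun k hk => ?_
  have hkn : k < n := Finset.mem_range.1 hk
  have hrev := psum_rev
    (fun j' : Fin n => W (gridPt t n ((j' : ℕ) + 1)) - W (gridPt t n (j' : ℕ))) (k+1)
    (by omega)
  rw [hrev, psum_path (le_refl n) W t hW0, psum_path (by omega : n - (k+1) ≤ n) W t hW0,
    gridPt_self (by omega : n ≠ 0)]
  have hnk : n - 1 - k = n - (k + 1) := by omega
  rw [hnk, gridPt_compl hkn]
  congr 1
  ring



section Main

variable {Ω : Type*} [MeasurableSpace Ω] {P : Measure Ω} [IsProbabilityMeasure P]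
  {B : ℝ → Ω → ℝ} {μ t : ℝ}

lemma Vvec_law (hB : IsBrownianMotion P B) (ht : 0 < t) (n : ℕ) :
    Measure.map (fun ω (j : Fin n) =>
        B (gridPt t n ((j : ℕ) + 1)) ω - B (gridPt t n (j : ℕ)) ω) P
      = Measure.pi (fun _ : Fin n => gaussianReal 0 (t / n).toNNReal) := by
  obtain ⟨hBm, hB0, hBc, hBi, hBg⟩ := hB
  refine map_pi_of_indep (fun i => (hBm _).sub (hBm _)) ?_ ?_
  · exact hBi n (fun k => gridPt t n k) (by show (0:ℝ) ≤ gridPt t n 0; rw [gridPt_zero]) (gridPt_mono ht.le n)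
  · intro i
    have hg := hBg (gridPt t n (i : ℕ)) (gridPt t n ((i : ℕ) + 1))
      (gridPt_nonneg ht.le n _) (gridPt_mono ht.le n (Nat.le_succ _))
    show Measure.map (fun ω => B (gridPt t n ((i : ℕ) + 1)) ω - B (gridPt t n (i : ℕ)) ω) P = _
    rw [hg, gridPt_diff]

lemma negVvec_law (hB : IsBrownianMotion P B) (ht : 0 < t) (n : ℕ) :
    Measure.map (fun ω (j : Fin n) =>
        -(B (gridPt t n ((j : ℕ) + 1)) ω - B (gridPt t n (j : ℕ)) ω)) P
      = Measure.pi (fun _ : Fin n => gaussianReal 0 (t / n).toNNReal) := by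
  obtain ⟨hBm, hB0, hBc, hBi, hBg⟩ := hB
  refine map_pi_of_indep (fun i => ((hBm _).sub (hBm _)).neg) ?_ ?_
  · have h := hBi n (fun k => gridPt t n k) (by show (0:ℝ) ≤ gridPt t n 0; rw [gridPt_zero]) (gridPt_mono ht.le n)
    exact h.comp (fun _ => fun x : ℝ => -x) (fun _ => measurable_neg)
  · intro i
    have hg := hBg (gridPt t n (i : ℕ)) (gridPt t n ((i : ℕ) + 1))
      (gridPt_nonneg ht.le n _) (gridPt_mono ht.le n (Nat.le_succ _))
    have hc : (fun ω => -(B (gridPt t n ((i : ℕ) + 1)) ω - B (gridPt t n (i : ℕ)) ω))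
        = (fun x : ℝ => -x) ∘ (fun ω => B (gridPt t n ((i : ℕ) + 1)) ω - B (gridPt t n (i : ℕ)) ω) :=
      rfl
    show Measure.map (fun ω => -(B (gridPt t n ((i : ℕ) + 1)) ω - B (gridPt t n (i : ℕ)) ω)) P = _
    rw [hc, ← Measure.map_map (g := fun x : ℝ => -x) (f := fun ω => B (gridPt t n ((i : ℕ) + 1)) ω - B (gridPt t n (i : ℕ)) ω) measurable_neg ((hBm _).sub (hBm _)), hg, gridPt_diff,
      gauss_map_neg]

lemma revVvec_law (hB : IsBrownianMotion P B) (ht : 0 < t) (n : ℕ) :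
    Measure.map (fun ω (j : Fin n) =>
        B (gridPt t n ((Fin.rev j : ℕ) + 1)) ω - B (gridPt t n (Fin.rev j : ℕ)) ω) P
      = Measure.pi (fun _ : Fin n => gaussianReal 0 (t / n).toNNReal) := by
  have hVm : Measurable (fun ω (j : Fin n) =>
      B (gridPt t n ((j : ℕ) + 1)) ω - B (gridPt t n (j : ℕ)) ω) :=
    measurable_pi_lambda _ fun j => (hB.1 _).sub (hB.1 _)
  have h := map_perm_pi hVm (Vvec_law hB ht n) Fin.revPerm
  exact h

lemma stage1 (hB : IsBrownianMotion P B) (ht : 0 < t) (n : ℕ) :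
    Measure.map (fun ω => ∑ k ∈ Finset.range n,
        t / n * Real.exp (2 * (B (gridPt t n k) ω - B t ω) + 2 * μ * (gridPt t n k - t))) P
      = Measure.map (fun ω => ∑ k ∈ Finset.range n,
        t / n * Real.exp (-2 * (B (gridPt t n (k+1)) ω + μ * gridPt t n (k+1)))) P := by
  have hBm := hB.1
  have hB0 := hB.2.1
  have hVm : Measurable (fun ω (j : Fin n) =>
      B (gridPt t n ((j : ℕ) + 1)) ω - B (gridPt t n (j : ℕ)) ω) :=
    measurable_pi_lambda _ fun j => (hBm _).sub (hBm _)
  have hRm : Measurable (fun ω (j : Fin n) =>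
      B (gridPt t n ((Fin.rev j : ℕ) + 1)) ω - B (gridPt t n (Fin.rev j : ℕ)) ω) :=
    measurable_pi_lambda _ fun j => (hBm _).sub (hBm _)
  have hGr : Measurable (Gr μ t n) := (continuous_Gr μ t n).measurable
  have hid1 : (fun ω => ∑ k ∈ Finset.range n,
      t / n * Real.exp (2 * (B (gridPt t n k) ω - B t ω) + 2 * μ * (gridPt t n k - t)))
      = (Gr μ t n) ∘ (fun ω (j : Fin n) =>
          B (gridPt t n ((Fin.rev j : ℕ) + 1)) ω - B (gridPt t n (Fin.rev j : ℕ)) ω) := by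
    funext ω
    exact (Gr_apply_rev μ ht n (fun s => B s ω) (hB0 ω)).symm
  have hid2 : (fun ω => ∑ k ∈ Finset.range n,
      t / n * Real.exp (-2 * (B (gridPt t n (k+1)) ω + μ * gridPt t n (k+1))))
      = (Gr μ t n) ∘ (fun ω (j : Fin n) =>
          B (gridPt t n ((j : ℕ) + 1)) ω - B (gridPt t n (j : ℕ)) ω) := by
    funext ω
    exact (Gr_apply μ t n (fun s => B s ω) (hB0 ω)).symm
  rw [hid1, hid2, ← Measure.map_map hGr hRm, ← Measure.map_map hGr hVm,
    revVvec_law hB ht n, Vvec_law hB ht n]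

lemma stage2 (hB : IsBrownianMotion P B) (ht : 0 < t) (n : ℕ) :
    Measure.map (fun ω => ∑ k ∈ Finset.range n,
        t / n * Real.exp (-2 * (B (gridPt t n k) ω + μ * gridPt t n k))) P
      = Measure.map (fun ω => ∑ k ∈ Finset.range n,
        t / n * Real.exp (2 * (B (gridPt t n k) ω + (-μ) * gridPt t n k))) P := by
  have hBm := hB.1
  have hB0 := hB.2.1
  have hVm : Measurable (fun ω (j : Fin n) =>
      B (gridPt t n ((j : ℕ) + 1)) ω - B (gridPt t n (j : ℕ)) ω) :=
    measurable_pi_lambda _ fun j => (hBm _).sub (hBm _)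
  have hNm : Measurable (fun ω (j : Fin n) =>
      -(B (gridPt t n ((j : ℕ) + 1)) ω - B (gridPt t n (j : ℕ)) ω)) :=
    measurable_pi_lambda _ fun j => ((hBm _).sub (hBm _)).neg
  have hGl : Measurable (Gl μ t n) := (continuous_Gl μ t n).measurable
  have hid1 : (fun ω => ∑ k ∈ Finset.range n,
      t / n * Real.exp (-2 * (B (gridPt t n k) ω + μ * gridPt t n k)))
      = (Gl μ t n) ∘ (fun ω (j : Fin n) =>
          -(B (gridPt t n ((j : ℕ) + 1)) ω - B (gridPt t n (j : ℕ)) ω)) := by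
    funext ω
    exact (Gl_apply_neg μ t n (fun s => B s ω) (hB0 ω)).symm
  have hid2 : (fun ω => ∑ k ∈ Finset.range n,
      t / n * Real.exp (2 * (B (gridPt t n k) ω + (-μ) * gridPt t n k)))
      = (Gl μ t n) ∘ (fun ω (j : Fin n) =>
          B (gridPt t n ((j : ℕ) + 1)) ω - B (gridPt t n (j : ℕ)) ω) := by
    funext ω
    exact (Gl_apply μ t n (fun s => B s ω) (hB0 ω)).symm
  rw [hid1, hid2, ← Measure.map_map hGl hNm, ← Measure.map_map hGl hVm,
    negVvec_law hB ht n, Vvec_law hB ht n]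

lemma tendsto_Xn (ht : 0 < t) (W : ℝ → ℝ) (hWc : Continuous W) (mu : ℝ) :
    Tendsto (fun n : ℕ => ∑ k ∈ Finset.range n,
        t / n * Real.exp (2 * (W (gridPt t n k) - W t) + 2 * mu * (gridPt t n k - t))) atTop
      (nhds (Real.exp (-2 * (W t + mu * t)) *
        ∫ s in (0:ℝ)..t, Real.exp (2 * (W s + mu * s)))) := by
  have hfc : Continuous fun s => Real.exp (2 * (W s - W t) + 2 * mu * (s - t)) :=
    Real.continuous_exp.comp
      ((continuous_const.mul (hWc.sub continuous_const)).add
        (continuous_const.mul (continuous_id.sub continuous_const)))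
  have h := riemann ht _ hfc (fun n k => gridPt t n k)
    (fun n k _ => ⟨le_refl _, gridPt_mono ht.le n (Nat.le_succ k)⟩)
  have hI : (∫ s in (0:ℝ)..t, Real.exp (2 * (W s - W t) + 2 * mu * (s - t)))
      = Real.exp (-2 * (W t + mu * t)) * ∫ s in (0:ℝ)..t, Real.exp (2 * (W s + mu * s)) := by
    rw [← intervalIntegral.integral_const_mul]
    refine intervalIntegral.integral_congr fun s _ => ?_
    rw [← Real.exp_add]
    congr 1
    ring
  rw [← hI]
  exact h

lemma tendsto_Yrn (ht : 0 < t) (W : ℝ → ℝ) (hWc : Continuous W) (mu : ℝ) :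
    Tendsto (fun n : ℕ => ∑ k ∈ Finset.range n,
        t / n * Real.exp (-2 * (W (gridPt t n (k+1)) + mu * gridPt t n (k+1)))) atTop
      (nhds (∫ s in (0:ℝ)..t, Real.exp (-2 * (W s + mu * s)))) := by
  have hfc : Continuous fun s => Real.exp (-2 * (W s + mu * s)) :=
    Real.continuous_exp.comp
      (continuous_const.mul (hWc.add (continuous_const.mul continuous_id)))
  exact riemann ht _ hfc (fun n k => gridPt t n (k+1))
    (fun n k _ => ⟨gridPt_mono ht.le n (Nat.le_succ k), le_refl _⟩)

lemma tendsto_Yln (ht : 0 < t) (W : ℝ → ℝ) (hWc : Continuous W) (mu : ℝ) :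
    Tendsto (fun n : ℕ => ∑ k ∈ Finset.range n,
        t / n * Real.exp (-2 * (W (gridPt t n k) + mu * gridPt t n k))) atTop
      (nhds (∫ s in (0:ℝ)..t, Real.exp (-2 * (W s + mu * s)))) := by
  have hfc : Continuous fun s => Real.exp (-2 * (W s + mu * s)) :=
    Real.continuous_exp.comp
      (continuous_const.mul (hWc.add (continuous_const.mul continuous_id)))
  exact riemann ht _ hfc (fun n k => gridPt t n k)
    (fun n k _ => ⟨le_refl _, gridPt_mono ht.le n (Nat.le_succ k)⟩)

lemma tendsto_Rn (ht : 0 < t) (W : ℝ → ℝ) (hWc : Continuous W) (mu : ℝ) :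
    Tendsto (fun n : ℕ => ∑ k ∈ Finset.range n,
        t / n * Real.exp (2 * (W (gridPt t n k) + (-mu) * gridPt t n k))) atTop
      (nhds (∫ s in (0:ℝ)..t, Real.exp (2 * (W s + (-mu) * s)))) := by
  have hfc : Continuous fun s => Real.exp (2 * (W s + (-mu) * s)) :=
    Real.continuous_exp.comp
      (continuous_const.mul (hWc.add (continuous_const.mul continuous_id)))
  exact riemann ht _ hfc (fun n k => gridPt t n k)
    (fun n k _ => ⟨le_refl _, gridPt_mono ht.le n (Nat.le_succ k)⟩)

end Main

end XiAux

/-- For fixed `t > 0`, the random variables `exp(-2B_t^{(μ)}) A_t^{(μ)}`,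
`∫_0^t exp(-2B_s^{(μ)}) ds` and `∫_0^t exp(2B_s^{(-μ)}) ds` have the same law. -/
theorem xi_identities_in_law
    {Ω : Type*} [MeasurableSpace Ω] (P : Measure Ω) [IsProbabilityMeasure P]
    (B : ℝ → Ω → ℝ) (hB : IsBrownianMotion P B)
    (μ t : ℝ) (ht : 0 < t) :
    Measure.map (fun ω => Real.exp (-2 * (B t ω + μ * t)) *
        ∫ s in (0:ℝ)..t, Real.exp (2 * (B s ω + μ * s))) P =
      Measure.map (fun ω => ∫ s in (0:ℝ)..t, Real.exp (-2 * (B s ω + μ * s))) P ∧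
    Measure.map (fun ω => ∫ s in (0:ℝ)..t, Real.exp (-2 * (B s ω + μ * s))) P =
      Measure.map (fun ω => ∫ s in (0:ℝ)..t, Real.exp (2 * (B s ω + (-μ) * s))) P := by
  have hBm := hB.1
  have hBc := hB.2.2.1
  constructor
  · refine XiAux.map_eq_of_tendsto
      (Zn := fun n ω => ∑ k ∈ Finset.range n,
        t / n * Real.exp (2 * (B (XiAux.gridPt t n k) ω - B t ω)
          + 2 * μ * (XiAux.gridPt t n k - t)))
      (Z'n := fun n ω => ∑ k ∈ Finset.range n,
        t / n * Real.exp (-2 * (B (XiAux.gridPt t n (k+1)) ω + μ * XiAux.gridPt t n (k+1))))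
      ?_ ?_ (fun n => XiAux.stage1 hB ht n) ?_ ?_
    · intro n
      refine Finset.measurable_sum _ fun k _ => ?_
      exact (Real.measurable_exp.comp
        ((((hBm _).sub (hBm t)).const_mul 2).add_const _)).const_mul _
    · intro n
      refine Finset.measurable_sum _ fun k _ => ?_
      exact (Real.measurable_exp.comp
        (((hBm _).add_const _).const_mul (-2))).const_mul _
    · exact fun ω => XiAux.tendsto_Xn ht (fun s => B s ω) (hBc ω) μ
    · exact fun ω => XiAux.tendsto_Yrn ht (fun s => B s ω) (hBc ω) μ
  · refine XiAux.map_eq_of_tendsto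
      (Zn := fun n ω => ∑ k ∈ Finset.range n,
        t / n * Real.exp (-2 * (B (XiAux.gridPt t n k) ω + μ * XiAux.gridPt t n k)))
      (Z'n := fun n ω => ∑ k ∈ Finset.range n,
        t / n * Real.exp (2 * (B (XiAux.gridPt t n k) ω + (-μ) * XiAux.gridPt t n k)))
      ?_ ?_ (fun n => XiAux.stage2 hB ht n) ?_ ?_
    · intro n
      refine Finset.measurable_sum _ fun k _ => ?_
      exact (Real.measurable_exp.comp
        (((hBm _).add_const _).const_mul (-2))).const_mul _
    · intro n
      refine Finset.measurable_sum _ fun k _ => ?_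
      exact (Real.measurable_exp.comp
        (((hBm _).add_const _).const_mul 2)).const_mul _
    · exact fun ω => XiAux.tendsto_Yln ht (fun s => B s ω) (hBc ω) μ
    · exact fun ω => XiAux.tendsto_Rn ht (fun s => B s ω) (hBc ω) μ
end
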